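/- arXiv:2109.03399 — 5 statements merged into one kernel-verified Lean document; each statement's English description precedes it below -/
import Mathlib

section
/- Let f: ℝⁿ → ℝ∪{+∞} be twice differentiable at x̄ in the extended sense. Then: (a) the limiting subdifferential satisfies ∂f(x̄) = {∇f(x̄)}; (b) for every ε > 0 there is a neighborhood U of x̄ such that for all x ∈ U one has ∂f(x) ≠ ∅ and ∂f(x) ⊂ {∇f(x̄) + ∇²f(x̄)(x−x̄)} + ε‖x−x̄‖·B, where B is the closed unit ball; (c) f is strictly differentiable at x̄, i.e. lim_{x,u→x̄, x≠u} [f(x)−f(u)−⟨∇f(x̄),x−u⟩]/‖x−u‖ = 0; (d) f(x) = f(x̄) + ⟨∇f(x̄), x−x̄⟩ + ½⟨x−x̄, ∇²f(x̄)(x−x̄)⟩ + o(‖x−x̄‖²) as x → x̄. -/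
open Filter Topology MeasureTheory Set RealInnerProductSpace

noncomputable section

section TangentCones

variable {X : Type*} [AddCommGroup X] [Module ℝ X] [TopologicalSpace X]

/-- Bouligand (sequential) tangent cone. -/
def seqTangentCone (Ω : Set X) (xb : X) : Set X :=
  {v | ∃ (t : ℕ → ℝ) (vk : ℕ → X), (∀ k, 0 < t k) ∧ Tendsto t atTop (𝓝 0) ∧
      Tendsto vk atTop (𝓝 v) ∧ ∀ k, xb + t k • vk k ∈ Ω}

/-- Second-order tangent set. -/
def secondOrderTangent (Ω : Set X) (xb w : X) : Set X :=
  {u | ∃ (t : ℕ → ℝ) (uk : ℕ → X), (∀ k, 0 < t k) ∧ Tendsto t atTop (𝓝 0) ∧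
      Tendsto uk atTop (𝓝 u) ∧ ∀ k, xb + t k • w + ((t k)^2/2) • uk k ∈ Ω}

/-- Parabolic derivability of a set at `xb` for `w`. -/
def ParabolicallyDerivable (Ω : Set X) (xb w : X) : Prop :=
  (secondOrderTangent Ω xb w).Nonempty ∧
  ∀ u ∈ secondOrderTangent Ω xb w, ∃ (ε : ℝ) (ξ : ℝ → X), 0 < ε ∧
    (∀ t ∈ Icc (0:ℝ) ε, ξ t ∈ Ω) ∧ ξ 0 = xb ∧
    Tendsto (fun t : ℝ => t⁻¹ • (ξ t - ξ 0)) (𝓝[>] 0) (𝓝 w) ∧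
    Tendsto (fun t : ℝ => (2/t^2) • (ξ t - ξ 0 - t • w)) (𝓝[>] 0) (𝓝 u)

end TangentCones

section Subdiff

variable {X : Type*} [NormedAddCommGroup X] [InnerProductSpace ℝ X]

/-- Regular (Fréchet) subdifferential of an `ℝ∪{+∞}`-valued function. -/
def regSubdiff (f : X → EReal) (xb : X) : Set X :=
  {v | f xb ≠ ⊤ ∧ (0 : EReal) ≤
    Filter.liminf (fun x => ((‖x - xb‖⁻¹ : ℝ) : EReal) *
      (f x - f xb - ((⟪v, x - xb⟫ : ℝ) : EReal))) (𝓝[≠] xb)}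

/-- Proximal subdifferential. -/
def proxSubdiff (f : X → EReal) (xb : X) : Set X :=
  {v | f xb ≠ ⊤ ∧ (⊥ : EReal) <
    Filter.liminf (fun x => (((‖x - xb‖^2)⁻¹ : ℝ) : EReal) *
      (f x - f xb - ((⟪v, x - xb⟫ : ℝ) : EReal))) (𝓝[≠] xb)}

/-- Limiting (Mordukhovich) subdifferential. -/
def limSubdiff (f : X → EReal) (xb : X) : Set X :=
  {v | f xb ≠ ⊤ ∧ ∃ (x : ℕ → X) (vk : ℕ → X), Tendsto x atTop (𝓝 xb) ∧
      Tendsto (fun k => f (x k)) atTop (𝓝 (f xb)) ∧ Tendsto vk atTop (𝓝 v) ∧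
      ∀ k, vk k ∈ regSubdiff f (x k)}

/-- Graph of the limiting subdifferential. -/
def gphSubdiff (f : X → EReal) : Set (X × X) := {p | p.2 ∈ limSubdiff f p.1}

/-- Subgradient graphical derivative `D(∂f)(xb|vb)(w)`. -/
def gDeriv (f : X → EReal) (xb vb : X) (w : X) : Set X :=
  {z | (w, z) ∈ seqTangentCone (gphSubdiff f) (xb, vb)}

/-- First-order difference quotient. -/
def sdQuot (f : X → EReal) (xb : X) (t : ℝ) (w : X) : EReal :=
  ((t⁻¹ : ℝ) : EReal) * (f (xb + t • w) - f xb)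

/-- Subderivative `df(xb)(w)`. -/
def subderiv (f : X → EReal) (xb w : X) : EReal :=
  Filter.liminf (fun p : ℝ × X => sdQuot f xb p.1 p.2) ((𝓝[>] (0:ℝ)) ×ˢ 𝓝 w)

/-- Second-order difference quotient `Δ²_t f(xb, v)(w)`. -/
def ssdQuot (f : X → EReal) (xb v : X) (t : ℝ) (w : X) : EReal :=
  ((2 / t^2 : ℝ) : EReal) * (f (xb + t • w) - f xb - ((t * ⟪v, w⟫ : ℝ) : EReal))

/-- Second subderivative `d²f(xb|v)(w)`. -/
def secondSubderiv (f : X → EReal) (xb v w : X) : EReal :=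
  Filter.liminf (fun p : ℝ × X => ssdQuot f xb v p.1 p.2) ((𝓝[>] (0:ℝ)) ×ˢ 𝓝 w)

/-- Parabolic difference quotient. -/
def psdQuot (f : X → EReal) (xb w : X) (t : ℝ) (z : X) : EReal :=
  ((2 / t^2 : ℝ) : EReal) *
    (f (xb + t • w + (t^2/2) • z) - f xb - (t : EReal) * subderiv f xb w)

/-- Parabolic subderivative `d²f(xb)(w|z)`. -/
def parabolicSubderiv (f : X → EReal) (xb w z : X) : EReal :=
  Filter.liminf (fun p : ℝ × X => psdQuot f xb w p.1 p.2) ((𝓝[>] (0:ℝ)) ×ˢ 𝓝 z)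

/-- Twice epi-differentiability at `xb` for `v`. -/
def TwiceEpiDiff (f : X → EReal) (xb v : X) : Prop :=
  ∀ w : X, ∀ t : ℕ → ℝ, (∀ k, 0 < t k) → Tendsto t atTop (𝓝 0) →
    ∃ wk : ℕ → X, Tendsto wk atTop (𝓝 w) ∧
      Tendsto (fun k => ssdQuot f xb v (t k) (wk k)) atTop (𝓝 (secondSubderiv f xb v w))

/-- Parabolic epi-differentiability at `xb` for `w`. -/
def ParaEpiDiff (f : X → EReal) (xb w : X) : Prop :=
  {z : X | parabolicSubderiv f xb w z < ⊤}.Nonempty ∧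
  ∀ z : X, ∀ t : ℕ → ℝ, (∀ k, 0 < t k) → Tendsto t atTop (𝓝 0) →
    ∃ zk : ℕ → X, Tendsto zk atTop (𝓝 z) ∧
      Tendsto (fun k => psdQuot f xb w (t k) (zk k)) atTop (𝓝 (parabolicSubderiv f xb w z))

/-- Parabolic regularity at `xb` for `v`. -/
def ParaRegular (f : X → EReal) (xb v : X) : Prop :=
  f xb ≠ ⊤ ∧ ∀ w : X, secondSubderiv f xb v w < ⊤ →
    ∃ (t : ℕ → ℝ) (wk : ℕ → X), (∀ k, 0 < t k) ∧ Tendsto t atTop (𝓝 0) ∧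
      Tendsto wk atTop (𝓝 w) ∧
      Tendsto (fun k => ssdQuot f xb v (t k) (wk k)) atTop (𝓝 (secondSubderiv f xb v w)) ∧
      ∃ C : ℝ, ∀ k, ‖wk k - w‖ ≤ C * t k

/-- Prox-regularity of `f` at `xb` for `vb`. -/
def ProxRegular (f : X → EReal) (xb vb : X) : Prop :=
  ∃ r ε : ℝ, 0 < r ∧ 0 < ε ∧
    ∀ x ∈ Metric.closedBall xb ε, ∀ u ∈ Metric.closedBall xb ε,
      f u - f xb < (ε : EReal) → f xb - f u < (ε : EReal) →
      ∀ v ∈ limSubdiff f u ∩ Metric.closedBall vb ε,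
        f u + ((⟪v, x - u⟫ - r/2 * ‖x - u‖^2 : ℝ) : EReal) ≤ f x

/-- Subdifferential continuity of `f` at `xb` for `vb`. -/
def SubdiffCont (f : X → EReal) (xb vb : X) : Prop :=
  ∀ (x v : ℕ → X), Tendsto x atTop (𝓝 xb) → Tendsto v atTop (𝓝 vb) →
    (∀ k, v k ∈ limSubdiff f (x k)) →
    Tendsto (fun k => f (x k)) atTop (𝓝 (f xb))

/-- Strong metric subregularity of `∂f` at `xb` for `0`. -/
def StrongMetricSubreg (f : X → EReal) (xb : X) : Prop :=
  (0 : X) ∈ limSubdiff f xb ∧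
  ∃ κ : ℝ, 0 < κ ∧ ∃ U ∈ 𝓝 xb, ∀ x ∈ U, ∀ v ∈ limSubdiff f x, ‖x - xb‖ ≤ κ * ‖v‖

/-- Effective domain of an `ℝ∪{+∞}`-valued function. -/
def edom (f : X → EReal) : Set X := {x | f x < ⊤}

/-- Convexity for `EReal`-valued functions. -/
def EConvexOn (g : X → EReal) : Prop :=
  ∀ x y : X, ∀ a b : ℝ, 0 ≤ a → 0 ≤ b → a + b = 1 →
    g (a • x + b • y) ≤ ((a : ℝ) : EReal) * g x + ((b : ℝ) : EReal) * g y

/-- Convex (analytic) subdifferential. -/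
def convexSubdiff (g : X → EReal) (yb : X) : Set X :=
  {y | ∀ z : X, g yb + ((⟪y, z - yb⟫ : ℝ) : EReal) ≤ g z}

/-- Fenchel conjugate. -/
def fenchel (θ : X → EReal) (v : X) : EReal :=
  ⨆ z : X, ((⟪v, z⟫ : ℝ) : EReal) - θ z

/-- Lipschitz continuity around `yb` relative to the domain, with constant `l`. -/
def LipRelDom (g : X → EReal) (yb : X) (l : ℝ) : Prop :=
  0 ≤ l ∧ ∃ V ∈ 𝓝 yb, ∀ y₁ ∈ edom g ∩ V, ∀ y₂ ∈ edom g ∩ V,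
    g y₁ ≤ g y₂ + ((l * ‖y₁ - y₂‖ : ℝ) : EReal)

end Subdiff

section TDE

variable {X : Type*} [NormedAddCommGroup X] [InnerProductSpace ℝ X]
  [CompleteSpace X] [MeasureSpace X]

/-- Twice differentiability in the extended sense for a real-valued function. -/
def TwiceDiffExtR (f : X → ℝ) (xb : X) (Df : X) (A : X →L[ℝ] X) : Prop :=
  HasGradientAt f Df xb ∧
  ∃ (U D : Set X) (K : NNReal) (G : X → X),
    U ∈ 𝓝 xb ∧ D ⊆ U ∧ volume (U \ D) = 0 ∧
    LipschitzOnWith K f U ∧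
    (∀ y ∈ D, HasGradientAt f (G y) y) ∧
    Tendsto (fun y => (‖y - xb‖⁻¹ : ℝ) • (G y - Df - A (y - xb))) (𝓝[D \ {xb}] xb) (𝓝 0)

/-- Twice differentiability in the extended sense for an `ℝ∪{+∞}`-valued function
(finite and Lipschitz around `xb`). -/
def TwiceDiffExt (f : X → EReal) (xb : X) (Df : X) (A : X →L[ℝ] X) : Prop :=
  f xb ≠ ⊤ ∧
  HasGradientAt (fun y => (f y).toReal) Df xb ∧
  ∃ (U D : Set X) (K : NNReal) (G : X → X),
    U ∈ 𝓝 xb ∧ D ⊆ U ∧ volume (U \ D) = 0 ∧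
    (∀ y ∈ U, f y ≠ ⊤) ∧
    LipschitzOnWith K (fun y => (f y).toReal) U ∧
    (∀ y ∈ D, HasGradientAt (fun z => (f z).toReal) (G y) y) ∧
    Tendsto (fun y => (‖y - xb‖⁻¹ : ℝ) • (G y - Df - A (y - xb))) (𝓝[D \ {xb}] xb) (𝓝 0)

end TDE

/-- Euclidean space shorthand. -/
abbrev Eucl (n : ℕ) := EuclideanSpace ℝ (Fin n)

/-- Bundle `m` real numbers into a point of `Eucl m`. -/
def vecOf {m : ℕ} (f : Fin m → ℝ) : Eucl m := (EuclideanSpace.equiv (Fin m) ℝ).symm f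

/-- The Jacobian, as a continuous linear map, built from the component gradients. -/
def jacCLM {n m : ℕ} (DF : Fin m → Eucl n) : Eucl n →L[ℝ] Eucl m :=
  ((EuclideanSpace.equiv (Fin m) ℝ).symm.toContinuousLinearMap).comp
    (ContinuousLinearMap.pi fun i => (innerSL ℝ (DF i)))

end

/-!
Near `xb` the function is finite and Lipschitz, and off a null set its gradient lies within
`ε ‖y - xb‖` of the affine map `y ↦ ∇f(xb) + ∇²f(xb) (y - xb)`. Lipschitz functions are absolutely
continuous on segments, and almost every translate of a segment meets a null set in a null set, so
integrating the gradient along segments and passing to the limit in the translation gives, for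
`y, z` near `xb` and `H = ∇²f(xb)`,
`|f y - f z - ⟪∇f(xb) + H (z - xb), y - z⟫ - ½ ⟪H (y - z), y - z⟫| ≤ ε (‖z - xb‖ + ‖y - z‖) ‖y - z‖`.
Taking `z = xb` gives (d) and dividing by `‖y - z‖` gives (c). Against this upper model a regular
subgradient at `z` is within `ε ‖z - xb‖` of `∇f(xb) + H (z - xb)`, and the bound survives the
limit defining `∂f`; this is (b), and (a) is its case `z = xb` together with `∇f(xb) ∈ ∂̂f(xb)`.
Limiting subgradients exist near `xb` because gradients at points of differentiability are
bounded by the Lipschitz constant.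
-/

open Metric
open scoped NNReal

theorem AbsolutelyContinuousOnInterval.abs_sub_le_of_ae_hasDerivAt {ψ : ℝ → ℝ} {a b M : ℝ}
    (hab : a ≤ b) (hψ : AbsolutelyContinuousOnInterval ψ a b)
    (hd : ∀ᵐ t, t ∈ Ioc a b → ∃ d, HasDerivAt ψ d t ∧ |d| ≤ M) :
    |ψ b - ψ a| ≤ M * (b - a) := by
  rw [← hψ.integral_deriv_eq_sub, ← abs_of_nonneg (sub_nonneg.2 hab)]
  refine intervalIntegral.norm_integral_le_of_norm_le_const_ae (f := deriv ψ) ?_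
  filter_upwards [hd] with t ht hmem
  obtain ⟨d, hder, hdM⟩ := ht (by rwa [uIoc_of_le hab] at hmem)
  rwa [hder.deriv, Real.norm_eq_abs]

theorem ae_ae_add_add_smul_notMem {E : Type*} [NormedAddCommGroup E] [NormedSpace ℝ E]
    [FiniteDimensional ℝ E] [MeasurableSpace E] [BorelSpace E]
    {μ : Measure E} [μ.IsAddHaarMeasure] {N : Set E} (hN : μ N = 0) (z e : E) :
    ∀ᵐ w ∂μ, ∀ᵐ t : ℝ, z + w + t • e ∉ N := by
  set N' := toMeasurable μ N
  have hS : MeasurableSet {p : E × ℝ | z + p.1 + p.2 • e ∈ N'} :=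
    (by fun_prop : Continuous fun p : E × ℝ ↦ z + p.1 + p.2 • e).measurable
      (measurableSet_toMeasurable μ N)
  have hnull : μ.prod volume {p : E × ℝ | z + p.1 + p.2 • e ∈ N'} = 0 := by
    rw [Measure.prod_apply_symm hS]
    refine lintegral_eq_zero_of_ae_eq_zero (ae_of_all _ fun t ↦ ?_)
    have : (fun w ↦ (w, t)) ⁻¹' {p : E × ℝ | z + p.1 + p.2 • e ∈ N'} =
        (fun w ↦ (z + t • e) + w) ⁻¹' N' := by
      ext w; simp [add_right_comm]
    simp [this, measure_preimage_add, N', hN]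
  filter_upwards [Measure.ae_ae_of_ae_prod (measure_eq_zero_iff_ae_notMem.1 hnull)] with w hw
  filter_upwards [hw] with t ht hmem
  exact ht (subset_toMeasurable μ N hmem)

section SecondOrderEstimate

variable {E : Type*} [NormedAddCommGroup E] [InnerProductSpace ℝ E] [CompleteSpace E]

theorem abs_sub_sub_inner_sub_le_of_ae_hasGradientAt {g : E → ℝ} {s : Set E} {K : ℝ≥0}
    (hg : LipschitzOnWith K g s) {xb Df z e : E} {A : E →L[ℝ] E} {η : ℝ}
    (hseg : ∀ t ∈ Icc (0 : ℝ) 1, z + t • e ∈ s)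
    (hgrad : ∀ᵐ t, t ∈ Ioc (0 : ℝ) 1 → ∃ G, HasGradientAt g G (z + t • e) ∧
      ‖G - (Df + A (z + t • e - xb))‖ ≤ η) :
    |g (z + e) - g z - ⟪Df + A (z - xb), e⟫ - 1 / 2 * ⟪A e, e⟫| ≤ η * ‖e‖ := by
  set c := Df + A (z - xb)
  have hline := hg.comp ((isometry_add_left z).lipschitz.comp
    (ContinuousLinearMap.toSpanSingleton ℝ e).lipschitz).lipschitzOnWith
    (s := uIcc 0 1) fun t ht ↦ hseg t (by rwa [uIcc_of_le zero_le_one] at ht)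
  have hpoly : ContDiffOn ℝ 1 (fun t : ℝ ↦ t * ⟪c, e⟫ + t ^ 2 / 2 * ⟪A e, e⟫) (uIcc 0 1) := by
    fun_prop
  have key := (hline.absolutelyContinuousOnInterval.sub
    hpoly.absolutelyContinuousOnInterval).abs_sub_le_of_ae_hasDerivAt (M := η * ‖e‖) zero_le_one ?_
  · rw [sub_zero, mul_one] at key
    refine (le_of_eq ?_).trans key
    simp only [Pi.sub_apply, Function.comp_apply, ContinuousLinearMap.toSpanSingleton_apply,
      one_smul, zero_smul, add_zero]
    congr 1
    ring
  filter_upwards [hgrad] with t ht hmem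
  obtain ⟨G, hG, hGη⟩ := ht hmem
  have hdg : HasDerivAt (fun t : ℝ ↦ g (z + t • e)) ⟪G, e⟫ t := by
    have hl : HasDerivAt (fun s : ℝ ↦ z + s • e) e t := by
      simpa using ((hasDerivAt_id t).smul_const e).const_add z
    simpa [Function.comp_def] using hG.hasFDerivAt.comp_hasDerivAt t hl
  have hdp : HasDerivAt (fun t : ℝ ↦ t * ⟪c, e⟫ + t ^ 2 / 2 * ⟪A e, e⟫)
      (⟪c, e⟫ + t * ⟪A e, e⟫) t := by
    refine (((hasDerivAt_id' t).mul_const ⟪c, e⟫).add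
      (((hasDerivAt_pow 2 t).div_const 2).mul_const ⟪A e, e⟫)).congr_deriv ?_
    ring
  refine ⟨_, hdg.sub hdp, ?_⟩
  have : ⟪G, e⟫ - (⟪c, e⟫ + t * ⟪A e, e⟫) = ⟪G - (Df + A (z + t • e - xb)), e⟫ := by
    simp only [c, inner_sub_left, inner_add_left, map_sub, map_add, map_smul, real_inner_smul_left]
    ring
  rw [this]
  exact (abs_real_inner_le_norm _ _).trans (mul_le_mul_of_nonneg_right hGη (norm_nonneg e))

/-- The segment estimate applies to the translates `[z + w, y + w]` that meet `N` in a null set;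
these `w` are dense, and the estimate passes to `w = 0` by continuity of `g`. -/
theorem abs_sub_sub_inner_sub_le_of_hasGradientAt_off_null [FiniteDimensional ℝ E]
    [MeasurableSpace E] [BorelSpace E] {μ : Measure E} [μ.IsAddHaarMeasure]
    {g : E → ℝ} {xb Df : E} {A : E →L[ℝ] E} {r ε : ℝ} {K : ℝ≥0} {N : Set E} (hε : 0 ≤ ε)
    (hg : LipschitzOnWith K g (ball xb r)) (hN : μ N = 0)
    (hgrad : ∀ y ∈ ball xb r, y ∉ N →
      ∃ G, HasGradientAt g G y ∧ ‖G - (Df + A (y - xb))‖ ≤ ε * ‖y - xb‖)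
    {z y : E} (hz : z ∈ ball xb r) (hy : y ∈ ball xb r) :
    |g y - g z - ⟪Df + A (z - xb), y - z⟫ - 1 / 2 * ⟪A (y - z), y - z⟫| ≤
      ε * (‖z - xb‖ + ‖y - z‖) * ‖y - z‖ := by
  set e := y - z
  set m := max (dist z xb) (dist y xb)
  have hmr : m < r := max_lt hz hy
  set S := {w : E | ∀ᵐ t : ℝ, z + w + t • e ∉ N}
  have : (𝓝[S] (0 : E)).NeBot :=
    mem_closure_iff_nhdsWithin_neBot.1 (Measure.dense_of_ae (ae_ae_add_add_smul_notMem hN z e) 0)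
  have hmargin : ∀ᶠ w in 𝓝[S] (0 : E), w ∈ S ∧ w ∈ ball 0 (r - m) :=
    eventually_mem_nhdsWithin.and (mem_nhdsWithin_of_mem_nhds (ball_mem_nhds 0 (sub_pos.2 hmr)))
  have hest : ∀ᶠ w in 𝓝[S] (0 : E),
      |g (y + w) - g (z + w) - ⟪Df + A (z + w - xb), e⟫ - 1 / 2 * ⟪A e, e⟫| ≤
        ε * (‖z + w - xb‖ + ‖e‖) * ‖e‖ := by
    filter_upwards [hmargin] with w ⟨hwS, hwr⟩
    rw [mem_ball_zero_iff] at hwr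
    have hseg : ∀ t ∈ Icc (0 : ℝ) 1, z + w + t • e ∈ ball xb r := by
      intro t ht
      have hzt : z + t • e ∈ closedBall xb m :=
        (convex_closedBall xb m).add_smul_sub_mem (mem_closedBall.2 (le_max_left _ _))
          (mem_closedBall.2 (le_max_right _ _)) ht
      rw [mem_ball, dist_eq_norm, add_right_comm, add_sub_right_comm]
      rw [mem_closedBall, dist_eq_norm] at hzt
      linarith [norm_add_le (z + t • e - xb) w]
    have key := abs_sub_sub_inner_sub_le_of_ae_hasGradientAt hg hseg
      (η := ε * (‖z + w - xb‖ + ‖e‖)) (by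
        filter_upwards [hwS] with t htN ht
        obtain ⟨G, hG, hGε⟩ := hgrad _ (hseg t (Ioc_subset_Icc_self ht)) htN
        refine ⟨G, hG, hGε.trans (mul_le_mul_of_nonneg_left ?_ hε)⟩
        rw [add_sub_right_comm]
        calc ‖z + w - xb + t • e‖ ≤ ‖z + w - xb‖ + ‖t • e‖ := norm_add_le _ _
          _ ≤ ‖z + w - xb‖ + ‖e‖ := by
            rw [norm_smul, Real.norm_of_nonneg ht.1.le]
            gcongr
            exact mul_le_of_le_one_left (norm_nonneg e) ht.2)
    rwa [show z + w + e = y + w by simp [e]; abel] at key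
  have hgz : ContinuousAt (fun w ↦ g (z + w)) 0 :=
    (hg.continuousOn.continuousAt (isOpen_ball.mem_nhds hz)).comp_of_eq
      (continuous_const_add z).continuousAt (add_zero z)
  have hgy : ContinuousAt (fun w ↦ g (y + w)) 0 :=
    (hg.continuousOn.continuousAt (isOpen_ball.mem_nhds hy)).comp_of_eq
      (continuous_const_add y).continuousAt (add_zero y)
  have hlhs : ContinuousAt (fun w ↦
      |g (y + w) - g (z + w) - ⟪Df + A (z + w - xb), e⟫ - 1 / 2 * ⟪A e, e⟫|) 0 :=
    (((hgy.sub hgz).sub (by fun_prop)).sub continuousAt_const).abs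
  have hrhs : ContinuousAt (fun w ↦ ε * (‖z + w - xb‖ + ‖e‖) * ‖e‖) 0 := by fun_prop
  simpa using le_of_tendsto_of_tendsto (hlhs.tendsto.mono_left nhdsWithin_le_nhds)
    (hrhs.tendsto.mono_left nhdsWithin_le_nhds) hest

end SecondOrderEstimate

section Subdifferentials

variable {E : Type*} [NormedAddCommGroup E] [InnerProductSpace ℝ E]

theorem mem_regSubdiff_of_hasGradientAt [CompleteSpace E] {f : E → EReal} {g : E → ℝ} {y G : E}
    (hfg : f =ᶠ[𝓝 y] fun x ↦ (g x : EReal)) (hG : HasGradientAt g G y) :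
    G ∈ regSubdiff f y := by
  refine ⟨by simp [hfg.eq_of_nhds], ?_⟩
  rcases (𝓝[≠] y).eq_or_neBot with h | h
  · simp [h] -- in the trivial space the `liminf` is over `⊥`, hence `⊤`
  have hquot : Tendsto (fun x ↦ ‖x - y‖⁻¹ * (g x - g y - ⟪G, x - y⟫)) (𝓝[≠] y) (𝓝 0) := by
    refine (tendsto_zero_iff_norm_tendsto_zero.2 ?_).mono_left nhdsWithin_le_nhds
    simpa [abs_mul] using hasGradientAt_iff_tendsto.1 hG
  refine ((EReal.tendsto_coe.2 hquot).congr' ?_).liminf_eq.ge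
  filter_upwards [nhdsWithin_le_nhds hfg] with x hx
  rw [hx, hfg.eq_of_nhds]
  norm_cast

theorem mem_limSubdiff_of_mem_regSubdiff {f : E → EReal} {z v : E} (hv : v ∈ regSubdiff f z) :
    v ∈ limSubdiff f z :=
  ⟨hv.1, fun _ ↦ z, fun _ ↦ v, tendsto_const_nhds, tendsto_const_nhds, tendsto_const_nhds,
    fun _ ↦ hv⟩

theorem eventually_inner_sub_le_of_mem_regSubdiff {f : E → EReal} {g : E → ℝ} {z v : E}
    (hfg : f =ᶠ[𝓝 z] fun x ↦ (g x : EReal)) (hv : v ∈ regSubdiff f z) {η : ℝ} (hη : 0 < η) :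
    ∀ᶠ x in 𝓝 z, ⟪v, x - z⟫ - η * ‖x - z‖ ≤ g x - g z := by
  have hlt := eventually_lt_of_lt_liminf
    (lt_of_lt_of_le (EReal.coe_lt_coe_iff.2 (neg_neg_of_pos hη)) hv.2)
  rw [eventually_nhdsWithin_iff] at hlt
  filter_upwards [hlt, hfg] with x hx hfx
  rcases eq_or_ne x z with rfl | hxz
  · simp
  have hpos : 0 < ‖x - z‖ := norm_pos_iff.2 (sub_ne_zero.2 hxz)
  specialize hx hxz
  rw [hfx, hfg.eq_of_nhds, show ((‖x - z‖⁻¹ : ℝ) : EReal) * (↑(g x) - ↑(g z) - ↑⟪v, x - z⟫) =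
    ((‖x - z‖⁻¹ * (g x - g z - ⟪v, x - z⟫) : ℝ) : EReal) by norm_cast, EReal.coe_lt_coe_iff,
    lt_inv_mul_iff₀ hpos] at hx
  linarith

/-- Test the subgradient inequality along the ray `z + t (v - c)`. -/
theorem norm_sub_le_of_mem_regSubdiff {f : E → EReal} {g : E → ℝ} {z v c : E} {β C : ℝ}
    (hβ : 0 ≤ β) (hfg : f =ᶠ[𝓝 z] fun x ↦ (g x : EReal))
    (hup : ∀ᶠ y in 𝓝 z, g y - g z ≤ ⟪c, y - z⟫ + β * ‖y - z‖ + C * ‖y - z‖ ^ 2)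
    (hv : v ∈ regSubdiff f z) : ‖v - c‖ ≤ β := by
  set u := v - c
  rcases eq_or_ne u 0 with hu | hu
  · rwa [hu, norm_zero]
  have hupos : 0 < ‖u‖ := norm_pos_iff.2 hu
  refine le_of_forall_pos_le_add fun η hη ↦ ?_
  have hray : Tendsto (fun t : ℝ ↦ z + t • u) (𝓝[>] 0) (𝓝 z) :=
    ((continuous_const.add (continuous_id.smul continuous_const)).tendsto' 0 z (by simp)).mono_left
      nhdsWithin_le_nhds
  have hev : ∀ᶠ t in 𝓝[>] (0 : ℝ), ‖u‖ ≤ β + η + C * t * ‖u‖ := by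
    filter_upwards [hray.eventually (eventually_inner_sub_le_of_mem_regSubdiff hfg hv hη),
      hray.eventually hup, self_mem_nhdsWithin] with t hlow hhigh (ht : 0 < t)
    simp only [add_sub_cancel_left, norm_smul, Real.norm_of_nonneg ht.le,
      real_inner_smul_right] at hlow hhigh
    have hvc : ⟪v, u⟫ - ⟪c, u⟫ = ‖u‖ * ‖u‖ := by
      rw [← inner_sub_left, real_inner_self_eq_norm_mul_norm]
    have : t * ‖u‖ * ‖u‖ ≤ t * ‖u‖ * (β + η + C * t * ‖u‖) := by nlinarith
    exact le_of_mul_le_mul_left this (by positivity)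
  have hlim : Tendsto (fun t : ℝ ↦ β + η + C * t * ‖u‖) (𝓝[>] 0) (𝓝 (β + η)) :=
    ((by fun_prop : Continuous fun t : ℝ ↦ β + η + C * t * ‖u‖).tendsto' 0 _
      (by simp)).mono_left nhdsWithin_le_nhds
  exact ge_of_tendsto hlim hev

theorem norm_sub_le_of_mem_limSubdiff {f : E → EReal} {U : Set E} (hU : IsOpen U)
    {F : E → E} {φ : E → ℝ} (hF : Continuous F) (hφ : Continuous φ)
    (h : ∀ z ∈ U, ∀ v ∈ regSubdiff f z, ‖v - F z‖ ≤ φ z) {x v : E} (hx : x ∈ U)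
    (hv : v ∈ limSubdiff f x) : ‖v - F x‖ ≤ φ x := by
  obtain ⟨-, xk, vk, hxk, -, hvk, hreg⟩ := hv
  refine le_of_tendsto_of_tendsto ((hvk.sub ((hF.tendsto x).comp hxk)).norm)
    ((hφ.tendsto x).comp hxk) ?_
  filter_upwards [hxk (hU.mem_nhds hx)] with k hk
  exact h _ hk _ (hreg k)

theorem limSubdiff_nonempty_of_tendsto [ProperSpace E] {f : E → EReal} {x : E} (hx : f x ≠ ⊤)
    {y G : ℕ → E} (hy : Tendsto y atTop (𝓝 x)) (hfy : Tendsto (fun k ↦ f (y k)) atTop (𝓝 (f x)))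
    (hG : ∀ k, G k ∈ regSubdiff f (y k)) (hbdd : Bornology.IsBounded (range G)) :
    (limSubdiff f x).Nonempty := by
  obtain ⟨v, -, φ, hφ, hv⟩ := tendsto_subseq_of_bounded hbdd (mem_range_self (f := G))
  exact ⟨v, hx, y ∘ φ, G ∘ φ, hy.comp hφ.tendsto_atTop, hfy.comp hφ.tendsto_atTop, hv,
    fun k ↦ hG (φ k)⟩

end Subdifferentials

namespace TwiceDiffExt

variable {E : Type*} [NormedAddCommGroup E] [InnerProductSpace ℝ E] [FiniteDimensional ℝ E]
  [MeasureSpace E] [BorelSpace E] [(volume : Measure E).IsAddHaarMeasure]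
  {f : E → EReal} {xb Df : E} {A : E →L[ℝ] E}

omit [BorelSpace E] [(volume : Measure E).IsAddHaarMeasure] in
theorem exists_ball_gradient_approx (hf : TwiceDiffExt f xb Df A) (hfbot : ∀ x, f x ≠ ⊥)
    {ε : ℝ} (hε : 0 < ε) :
    ∃ δ > 0, ∃ (K : ℝ≥0) (N : Set E), volume N = 0 ∧
      (∀ x ∈ ball xb δ, f =ᶠ[𝓝 x] fun y ↦ ((f y).toReal : EReal)) ∧
      LipschitzOnWith K (fun y ↦ (f y).toReal) (ball xb δ) ∧
      ∀ y ∈ ball xb δ, y ∉ N → ∃ G, HasGradientAt (fun y ↦ (f y).toReal) G y ∧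
        ‖G - (Df + A (y - xb))‖ ≤ ε * ‖y - xb‖ := by
  obtain ⟨-, hgrad₀, U, D, K, G, hU, -, hnull, hfin, hlip, hGD, htend⟩ := hf
  have hclose := NormedAddGroup.tendsto_nhds_zero.1 htend ε hε
  rw [eventually_nhdsWithin_iff] at hclose
  obtain ⟨δ, hδ, hball⟩ := Metric.eventually_nhds_iff_ball.1 (hclose.and (interior_mem_nhds.2 hU))
  have hδU : ball xb δ ⊆ U := fun y hy ↦ interior_subset (hball y hy).2
  refine ⟨δ, hδ, K, U \ D, hnull, fun x hx ↦ ?_, hlip.mono hδU, fun y hy hyN ↦ ?_⟩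
  · filter_upwards [isOpen_ball.mem_nhds hx] with y hy
    exact (EReal.coe_toReal (hfin y (hδU hy)) (hfbot y)).symm
  have hyD : y ∈ D := by by_contra hyD; exact hyN ⟨hδU hy, hyD⟩
  rcases eq_or_ne y xb with rfl | hne
  · exact ⟨Df, hgrad₀, by simp⟩
  refine ⟨G y, hGD y hyD, ?_⟩
  have hlt := (hball y hy).1 ⟨hyD, hne⟩
  rw [norm_smul, norm_inv, norm_norm, inv_mul_lt_iff₀ (norm_pos_iff.2 (sub_ne_zero.2 hne))] at hlt
  rw [← sub_sub]
  linarith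

theorem exists_ball_taylor_estimate (hf : TwiceDiffExt f xb Df A) (hfbot : ∀ x, f x ≠ ⊥)
    {ε : ℝ} (hε : 0 < ε) :
    ∃ δ > 0, (∀ x ∈ ball xb δ, f =ᶠ[𝓝 x] fun y ↦ ((f y).toReal : EReal)) ∧
      ∀ z ∈ ball xb δ, ∀ y ∈ ball xb δ,
        |(f y).toReal - (f z).toReal - ⟪Df + A (z - xb), y - z⟫ - 1 / 2 * ⟪A (y - z), y - z⟫| ≤
          ε * (‖z - xb‖ + ‖y - z‖) * ‖y - z‖ := by
  obtain ⟨δ, hδ, K, N, hN, hfg, hlip, hgrad⟩ := hf.exists_ball_gradient_approx hfbot hε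
  exact ⟨δ, hδ, hfg, fun z hz y hy ↦
    abs_sub_sub_inner_sub_le_of_hasGradientAt_off_null hε.le hlip hN hgrad hz hy⟩

omit [BorelSpace E] in
theorem eventually_limSubdiff_nonempty (hf : TwiceDiffExt f xb Df A) (hfbot : ∀ x, f x ≠ ⊥) :
    ∀ᶠ x in 𝓝 xb, (limSubdiff f x).Nonempty := by
  obtain ⟨δ, hδ, K, N, hN, hfg, hlip, hgrad⟩ := hf.exists_ball_gradient_approx hfbot one_pos
  filter_upwards [ball_mem_nhds xb hδ] with x hx
  have hdense : Dense {y | y ∉ N} := Measure.dense_of_ae (measure_eq_zero_iff_ae_notMem.1 hN)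
  obtain ⟨y, hyN, hyx⟩ :=
    mem_closure_iff_seq_limit.1 (hdense.open_subset_closure_inter isOpen_ball hx)
  choose G hG _ using fun k ↦ hgrad (y k) (hyN k).1 (hyN k).2
  have hgx : ContinuousAt (fun y ↦ (f y).toReal) x :=
    hlip.continuousOn.continuousAt (isOpen_ball.mem_nhds hx)
  refine limSubdiff_nonempty_of_tendsto
    (by rw [(hfg x hx).eq_of_nhds]; exact EReal.coe_ne_top _) hyx ?_
    (fun k ↦ mem_regSubdiff_of_hasGradientAt (hfg _ (hyN k).1) (hG k)) ?_
  · rw [(hfg x hx).eq_of_nhds]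
    refine (EReal.tendsto_coe.2 (hgx.tendsto.comp hyx)).congr fun k ↦ ?_
    exact ((hfg _ (hyN k).1).eq_of_nhds).symm
  · refine isBounded_iff_forall_norm_le.2 ⟨K, forall_mem_range.2 fun k ↦ ?_⟩
    have := (hG k).hasFDerivAt.le_of_lipschitzOn (isOpen_ball.mem_nhds (hyN k).1) hlip
    simpa using this

theorem eventually_norm_sub_le_of_mem_limSubdiff (hf : TwiceDiffExt f xb Df A)
    (hfbot : ∀ x, f x ≠ ⊥) {ε : ℝ} (hε : 0 < ε) :
    ∀ᶠ x in 𝓝 xb, ∀ v ∈ limSubdiff f x, ‖v - (Df + A (x - xb))‖ ≤ ε * ‖x - xb‖ := by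
  obtain ⟨δ, hδ, hfg, hest⟩ := hf.exists_ball_taylor_estimate hfbot hε
  filter_upwards [ball_mem_nhds xb hδ] with x hx v hv
  refine norm_sub_le_of_mem_limSubdiff (F := fun x ↦ Df + A (x - xb)) (φ := fun x ↦ ε * ‖x - xb‖)
    isOpen_ball (by fun_prop) (by fun_prop) (fun z hz v hv ↦ ?_) hx hv
  refine norm_sub_le_of_mem_regSubdiff (C := ‖A‖ / 2 + ε) (by positivity) (hfg z hz) ?_ hv
  filter_upwards [isOpen_ball.mem_nhds hz] with y hy
  have h₁ := (abs_le.1 (hest z hz y hy)).2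
  have h₂ : ⟪A (y - z), y - z⟫ ≤ ‖A‖ * ‖y - z‖ ^ 2 := by
    rw [sq, ← mul_assoc]
    exact (real_inner_le_norm _ _).trans (by gcongr; exact A.le_opNorm _)
  nlinarith

theorem limSubdiff_eq (hf : TwiceDiffExt f xb Df A) (hfbot : ∀ x, f x ≠ ⊥) :
    limSubdiff f xb = {Df} := by
  obtain ⟨δ, hδ, -, -, -, hfg, -⟩ := hf.exists_ball_gradient_approx hfbot one_pos
  refine eq_singleton_iff_unique_mem.2 ⟨mem_limSubdiff_of_mem_regSubdiff
    (mem_regSubdiff_of_hasGradientAt (hfg xb (mem_ball_self hδ)) hf.2.1), fun v hv ↦ ?_⟩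
  have := (hf.eventually_norm_sub_le_of_mem_limSubdiff hfbot one_pos).self_of_nhds v hv
  simpa [sub_eq_zero] using this

theorem tendsto_inv_norm_mul_sub_sub_inner (hf : TwiceDiffExt f xb Df A)
    (hfbot : ∀ x, f x ≠ ⊥) :
    Tendsto (fun p : E × E ↦
        ((‖p.1 - p.2‖⁻¹ : ℝ) : EReal) * (f p.1 - f p.2 - ((⟪Df, p.1 - p.2⟫ : ℝ) : EReal)))
      (𝓝[{p : E × E | p.1 ≠ p.2}] (xb, xb)) (𝓝 0) := by
  obtain ⟨δ, hδ, hfg, hest⟩ := hf.exists_ball_taylor_estimate hfbot one_pos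
  set g := fun y ↦ (f y).toReal
  have hnear : ball xb δ ×ˢ ball xb δ ∈ 𝓝 (xb, xb) :=
    prod_mem_nhds (ball_mem_nhds xb hδ) (ball_mem_nhds xb hδ)
  have hbound : ∀ p ∈ ball xb δ ×ˢ ball xb δ,
      ‖‖p.1 - p.2‖⁻¹ * (g p.1 - g p.2 - ⟪Df, p.1 - p.2⟫)‖ ≤
        (1 + ‖A‖) * (‖p.2 - xb‖ + ‖p.1 - p.2‖) := by
    rintro ⟨y, z⟩ ⟨hy, hz⟩
    dsimp only
    set d := y - z
    have hR := abs_le.1 (hest z hz y hy)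
    have hAu : |⟪A (z - xb), d⟫| ≤ ‖A‖ * ‖z - xb‖ * ‖d‖ :=
      (abs_real_inner_le_norm _ _).trans (by gcongr; exact A.le_opNorm _)
    have hAd : |⟪A d, d⟫| ≤ ‖A‖ * ‖d‖ * ‖d‖ :=
      (abs_real_inner_le_norm _ _).trans (by gcongr; exact A.le_opNorm _)
    have hnum : |g y - g z - ⟪Df, d⟫| ≤ (1 + ‖A‖) * (‖z - xb‖ + ‖d‖) * ‖d‖ := by
      rw [inner_add_left] at hR
      rw [abs_le] at hAu hAd ⊢
      constructor <;> nlinarith [norm_nonneg d, norm_nonneg (z - xb), norm_nonneg A]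
    rw [Real.norm_eq_abs, abs_mul, abs_inv, abs_norm]
    rcases eq_or_ne d 0 with hd | hd
    · rw [hd, norm_zero, inv_zero, zero_mul]
      positivity
    rw [inv_mul_le_iff₀ (norm_pos_iff.2 hd)]
    linarith
  have hreal : Tendsto (fun p : E × E ↦ ‖p.1 - p.2‖⁻¹ * (g p.1 - g p.2 - ⟪Df, p.1 - p.2⟫))
      (𝓝 (xb, xb)) (𝓝 0) := by
    refine squeeze_zero_norm' (eventually_of_mem hnear hbound) ?_
    exact (by fun_prop : Continuous fun p : E × E ↦ (1 + ‖A‖) * (‖p.2 - xb‖ + ‖p.1 - p.2‖)).tendsto'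
      _ _ (by simp)
  refine ((EReal.tendsto_coe.2 hreal).mono_left nhdsWithin_le_nhds).congr' ?_
  filter_upwards [mem_nhdsWithin_of_mem_nhds hnear] with p ⟨h₁, h₂⟩
  rw [(hfg _ h₁).eq_of_nhds, (hfg _ h₂).eq_of_nhds]
  simp only [g]
  norm_cast

theorem eventually_taylor_bounds (hf : TwiceDiffExt f xb Df A) (hfbot : ∀ x, f x ≠ ⊥)
    {ε : ℝ} (hε : 0 < ε) :
    ∀ᶠ x in 𝓝 xb,
      f x ≤ f xb + ((⟪Df, x - xb⟫ + 1/2 * ⟪x - xb, A (x - xb)⟫ + ε * ‖x - xb‖^2 : ℝ) : EReal) ∧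
      f xb + ((⟪Df, x - xb⟫ + 1/2 * ⟪x - xb, A (x - xb)⟫ - ε * ‖x - xb‖^2 : ℝ) : EReal) ≤ f x := by
  obtain ⟨δ, hδ, hfg, hest⟩ := hf.exists_ball_taylor_estimate hfbot hε
  filter_upwards [ball_mem_nhds xb hδ] with x hx
  have h := abs_le.1 (hest xb (mem_ball_self hδ) x hx)
  simp only [sub_self, map_zero, add_zero, norm_zero, zero_add] at h
  rw [(hfg x hx).eq_of_nhds, (hfg xb (mem_ball_self hδ)).eq_of_nhds, ← EReal.coe_add,
    ← EReal.coe_add, EReal.coe_le_coe_iff, EReal.coe_le_coe_iff, real_inner_comm (A (x - xb))]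
  constructor <;> nlinarith

end TwiceDiffExt

/-- properties of functions twice differentiable in the extended sense:
(a) the limiting subdifferential reduces to the gradient; (b) an outer estimate
`∂f(x) ⊆ ∇f(xb) + ∇²f(xb)(x−xb) + o(‖x−xb‖)𝔹` with nonemptiness near `xb`;
(c) strict differentiability at `xb`; (d) the second-order Taylor expansion. -/
theorem statement0 {n : ℕ} (f : Eucl n → EReal) (hfbot : ∀ x, f x ≠ ⊥)
    (xb Df : Eucl n) (A : Eucl n →L[ℝ] Eucl n)
    (hf : TwiceDiffExt f xb Df A) :
    limSubdiff f xb = {Df} ∧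
    (∀ ε : ℝ, 0 < ε → ∃ U ∈ 𝓝 xb, ∀ x ∈ U,
      (limSubdiff f x).Nonempty ∧
      ∀ v ∈ limSubdiff f x, ‖v - (Df + A (x - xb))‖ ≤ ε * ‖x - xb‖) ∧
    Tendsto (fun p : Eucl n × Eucl n =>
        ((‖p.1 - p.2‖⁻¹ : ℝ) : EReal) *
          (f p.1 - f p.2 - ((⟪Df, p.1 - p.2⟫ : ℝ) : EReal)))
      (𝓝[{p : Eucl n × Eucl n | p.1 ≠ p.2}] (xb, xb)) (𝓝 (0 : EReal)) ∧
    (∀ ε : ℝ, 0 < ε → ∃ U ∈ 𝓝 xb, ∀ x ∈ U,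
      f x ≤ f xb + ((⟪Df, x - xb⟫ + 1/2 * ⟪x - xb, A (x - xb)⟫ + ε * ‖x - xb‖^2 : ℝ) : EReal) ∧
      f xb + ((⟪Df, x - xb⟫ + 1/2 * ⟪x - xb, A (x - xb)⟫ - ε * ‖x - xb‖^2 : ℝ) : EReal) ≤ f x) := by
  refine ⟨hf.limSubdiff_eq hfbot, fun ε hε ↦ ?_, hf.tendsto_inv_norm_mul_sub_sub_inner hfbot,
    fun ε hε ↦ (hf.eventually_taylor_bounds hfbot hε).exists_mem⟩
  exact ((hf.eventually_limSubdiff_nonempty hfbot).and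
    (hf.eventually_norm_sub_le_of_mem_limSubdiff hfbot hε)).exists_mem
end

section
/- Let φ: ℝⁿ → ℝ∪{+∞} be twice differentiable at x̄ in the extended sense, let ψ: ℝⁿ → ℝ∪{+∞} be proper and lower semicontinuous on a neighborhood of x̄ with ψ(x̄) finite, and let v̄ ∈ ∂(φ+ψ)(x̄). Then for every w ∈ ℝⁿ, d²(φ+ψ)(x̄|v̄)(w) = ⟨w, ∇²φ(x̄)w⟩ + d²ψ(x̄|v̄−∇φ(x̄))(w) (equality in ℝ∪{±∞}). -/
open Filter Topology MeasureTheory Set RealInnerProductSpace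

set_option maxHeartbeats 1000000

section AuxProofs
open scoped ENNReal

/-- FTC-type bound for Lipschitz functions differentiable a.e. on (0,1). -/
lemma aux_ftc_bound (h : ℝ → ℝ) (K : NNReal) (hlip : LipschitzWith K h) (M : ℝ)
    (hae : ∀ᵐ s ∂(volume.restrict (Set.Ioo (0:ℝ) 1)), ∃ d : ℝ, HasDerivAt h d s ∧ |d| ≤ M) :
    |h 1 - h 0| ≤ M := by
  have hcont : Continuous h := hlip.continuous
  set δ : ℕ → ℝ := fun k => ((k:ℝ)+1)⁻¹ with hδ
  have hδpos : ∀ k, 0 < δ k := fun k => by positivity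
  have hδlim : Tendsto δ atTop (𝓝 0) := tendsto_one_div_add_atTop_nhds_zero_nat.congr (by
    intro k; simp [hδ, one_div])
  set q : ℕ → ℝ → ℝ := fun k s => (h (s + δ k) - h s) / δ k with hq
  have hqabs : ∀ k s, |q k s| ≤ (K:ℝ) := by
    intro k s
    have h1 : |h (s + δ k) - h s| ≤ (K:ℝ) * δ k := by
      have := hlip.dist_le_mul (s + δ k) s
      rw [Real.dist_eq, Real.dist_eq] at this
      simpa [abs_of_pos (hδpos k)] using this
    rw [hq]
    simp only [abs_div, abs_of_pos (hδpos k)]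
    rw [div_le_iff₀ (hδpos k)]
    linarith [h1]
  -- dominated convergence towards ∫ deriv h over Ioo 0 1
  have hmeas : ∀ k, AEStronglyMeasurable (q k) (volume.restrict (Set.Ioo (0:ℝ) 1)) := by
    intro k
    exact (((hcont.comp (continuous_id.add continuous_const)).sub hcont).div_const _).aestronglyMeasurable
  have hbound : ∀ k, ∀ᵐ s ∂(volume.restrict (Set.Ioo (0:ℝ) 1)), ‖q k s‖ ≤ (K:ℝ) :=
    fun k => Filter.Eventually.of_forall (fun s => by simpa using hqabs k s)
  have hlim : ∀ᵐ s ∂(volume.restrict (Set.Ioo (0:ℝ) 1)),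
      Tendsto (fun k => q k s) atTop (𝓝 (deriv h s)) := by
    filter_upwards [hae] with s hs
    obtain ⟨d, hd, _⟩ := hs
    rw [hd.deriv]
    have hslope := hasDerivAt_iff_tendsto_slope.1 hd
    have hcomp : Tendsto (fun k => s + δ k) atTop (𝓝[≠] s) := by
      apply tendsto_nhdsWithin_of_tendsto_nhds_of_eventually_within
      · simpa using (tendsto_const_nhds.add hδlim)
      · exact Filter.Eventually.of_forall (fun k => by
          simp only [Set.mem_compl_iff, Set.mem_singleton_iff]
          have := hδpos k; intro hh; nlinarith)
    have := hslope.comp hcomp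
    apply this.congr
    intro k
    simp only [Function.comp_apply, slope_def_field, hq]
    rw [div_eq_div_iff (by have := hδpos k; intro hh; nlinarith : s + δ k - s ≠ 0) (hδpos k).ne']
    ring
  have hDC : Tendsto (fun k => ∫ s in Set.Ioo (0:ℝ) 1, q k s) atTop
      (𝓝 (∫ s in Set.Ioo (0:ℝ) 1, deriv h s)) :=
    MeasureTheory.tendsto_integral_of_dominated_convergence _ hmeas
      (integrable_const ((K:ℝ))) hbound hlim
  -- the other limit: h 1 - h 0
  have hint : ∀ k, ∫ s in Set.Ioo (0:ℝ) 1, q k s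
      = ((∫ s in (1:ℝ)..(1+δ k), h s) - ∫ s in (0:ℝ)..(δ k), h s) / δ k := by
    intro k
    have hIoo : ∫ s in Set.Ioo (0:ℝ) 1, q k s = ∫ s in (0:ℝ)..1, q k s := by
      rw [intervalIntegral.integral_of_le zero_le_one, MeasureTheory.integral_Ioc_eq_integral_Ioo]
    rw [hIoo]
    have hsplit : ∫ s in (0:ℝ)..1, q k s
        = ((∫ s in (0:ℝ)..1, h (s + δ k)) - ∫ s in (0:ℝ)..1, h s) / δ k := by
      simp only [hq]
      rw [intervalIntegral.integral_div]
      congr 1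
      exact intervalIntegral.integral_sub
        ((hcont.comp (continuous_id.add continuous_const)).intervalIntegrable _ _)
        (hcont.intervalIntegrable _ _)
    rw [hsplit]
    congr 1
    rw [intervalIntegral.integral_comp_add_right h (δ k)]
    have i1 : IntervalIntegrable h volume (0 + δ k) 1 := hcont.intervalIntegrable _ _
    have i2 : IntervalIntegrable h volume 1 (1 + δ k) := hcont.intervalIntegrable _ _
    have i3 : IntervalIntegrable h volume 0 (0 + δ k) := hcont.intervalIntegrable _ _
    have e1 : ∫ s in (0 + δ k)..(1 + δ k), h s
        = (∫ s in (0 + δ k)..1, h s) + ∫ s in (1:ℝ)..(1 + δ k), h s :=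
      (intervalIntegral.integral_add_adjacent_intervals i1 i2).symm
    have e2 : ∫ s in (0:ℝ)..1, h s
        = (∫ s in (0:ℝ)..(0 + δ k), h s) + ∫ s in (0 + δ k)..1, h s :=
      (intervalIntegral.integral_add_adjacent_intervals i3 i1).symm
    rw [e1, e2]
    simp only [zero_add]
    ring
  have hto : Tendsto (fun k => ∫ s in Set.Ioo (0:ℝ) 1, q k s) atTop (𝓝 (h 1 - h 0)) := by
    have key : ∀ k, |(∫ s in Set.Ioo (0:ℝ) 1, q k s) - (h 1 - h 0)| ≤ 2 * (K:ℝ) * δ k := by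
      intro k
      rw [hint k]
      have b1 : |(∫ s in (1:ℝ)..(1+δ k), h s) - δ k * h 1| ≤ (K:ℝ) * δ k * δ k := by
        have : ∫ s in (1:ℝ)..(1+δ k), ((h s) - h 1) = (∫ s in (1:ℝ)..(1+δ k), h s) - δ k * h 1 := by
          rw [intervalIntegral.integral_sub (hcont.intervalIntegrable _ _)
            (intervalIntegrable_const)]
          simp [mul_comm]
        rw [← this]
        have := intervalIntegral.norm_integral_le_of_norm_le_const
          (C := (K:ℝ) * δ k) (f := fun s => h s - h 1) (a := 1) (b := 1 + δ k) ?_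
        · rw [Real.norm_eq_abs] at this
          calc |∫ s in (1:ℝ)..(1+δ k), (h s - h 1)| ≤ (K:ℝ) * δ k * |1 + δ k - 1| := this
          _ = (K:ℝ) * δ k * δ k := by rw [add_sub_cancel_left, abs_of_pos (hδpos k)]
        · intro s hs
          rw [Set.uIoc_of_le (by linarith [hδpos k])] at hs
          have h1 : |h s - h 1| ≤ (K:ℝ) * |s - 1| := by
            have := hlip.dist_le_mul s 1
            rw [Real.dist_eq, Real.dist_eq] at this; exact this
          have h2 : |s - 1| ≤ δ k := by
            rw [abs_of_nonneg (by linarith [hs.1])]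
            linarith [hs.2]
          calc ‖h s - h 1‖ = |h s - h 1| := rfl
          _ ≤ (K:ℝ) * |s - 1| := h1
          _ ≤ (K:ℝ) * δ k := mul_le_mul_of_nonneg_left h2 (NNReal.coe_nonneg K)
      have b2 : |(∫ s in (0:ℝ)..(δ k), h s) - δ k * h 0| ≤ (K:ℝ) * δ k * δ k := by
        have : ∫ s in (0:ℝ)..(δ k), ((h s) - h 0) = (∫ s in (0:ℝ)..(δ k), h s) - δ k * h 0 := by
          rw [intervalIntegral.integral_sub (hcont.intervalIntegrable _ _)
            (intervalIntegrable_const)]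
          simp [mul_comm]
        rw [← this]
        have := intervalIntegral.norm_integral_le_of_norm_le_const
          (C := (K:ℝ) * δ k) (f := fun s => h s - h 0) (a := 0) (b := δ k) ?_
        · rw [Real.norm_eq_abs] at this
          calc |∫ s in (0:ℝ)..(δ k), (h s - h 0)| ≤ (K:ℝ) * δ k * |δ k - 0| := this
          _ = (K:ℝ) * δ k * δ k := by rw [sub_zero, abs_of_pos (hδpos k)]
        · intro s hs
          rw [Set.uIoc_of_le (by linarith [hδpos k])] at hs
          have h1 : |h s - h 0| ≤ (K:ℝ) * |s - 0| := by
            have := hlip.dist_le_mul s 0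
            rw [Real.dist_eq, Real.dist_eq] at this; exact this
          have h2 : |s - 0| ≤ δ k := by
            rw [sub_zero, abs_of_nonneg (le_of_lt hs.1)]
            linarith [hs.2]
          calc ‖h s - h 0‖ = |h s - h 0| := rfl
          _ ≤ (K:ℝ) * |s - 0| := h1
          _ ≤ (K:ℝ) * δ k := mul_le_mul_of_nonneg_left h2 (NNReal.coe_nonneg K)
      have hne := (hδpos k).ne'
      have expand : ((∫ s in (1:ℝ)..(1+δ k), h s) - ∫ s in (0:ℝ)..(δ k), h s) / δ k - (h 1 - h 0)
          = (((∫ s in (1:ℝ)..(1+δ k), h s) - δ k * h 1)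
            - ((∫ s in (0:ℝ)..(δ k), h s) - δ k * h 0)) / δ k := by
        field_simp
        ring
      rw [expand]
      rw [abs_div, abs_of_pos (hδpos k), div_le_iff₀ (hδpos k)]
      calc |((∫ s in (1:ℝ)..(1+δ k), h s) - δ k * h 1) - ((∫ s in (0:ℝ)..(δ k), h s) - δ k * h 0)|
          ≤ |(∫ s in (1:ℝ)..(1+δ k), h s) - δ k * h 1| + |(∫ s in (0:ℝ)..(δ k), h s) - δ k * h 0| :=
            abs_sub _ _
        _ ≤ (K:ℝ) * δ k * δ k + (K:ℝ) * δ k * δ k := add_le_add b1 b2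
        _ = 2 * (K:ℝ) * δ k * δ k := by ring
    have h2K : Tendsto (fun k => 2 * (K:ℝ) * δ k) atTop (𝓝 0) := by
      simpa using hδlim.const_mul (2 * (K:ℝ))
    rw [tendsto_iff_dist_tendsto_zero]
    apply squeeze_zero (fun k => dist_nonneg) (fun k => ?_) h2K
    rw [Real.dist_eq]
    exact key k
  have heq : ∫ s in Set.Ioo (0:ℝ) 1, deriv h s = h 1 - h 0 := tendsto_nhds_unique hDC hto
  -- bound
  rw [← heq]
  have hbd : ∀ᵐ s ∂(volume.restrict (Set.Ioo (0:ℝ) 1)), ‖deriv h s‖ ≤ M := by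
    filter_upwards [hae] with s hs
    obtain ⟨d, hd, hdM⟩ := hs
    rw [hd.deriv]; exact hdM
  calc |∫ s in Set.Ioo (0:ℝ) 1, deriv h s| = ‖∫ s in Set.Ioo (0:ℝ) 1, deriv h s‖ := rfl
  _ ≤ M * (volume.restrict (Set.Ioo (0:ℝ) 1) Set.univ).toReal :=
      MeasureTheory.norm_integral_le_of_norm_le_const hbd
  _ = M := by simp

lemma aux_good_ae {n : ℕ} (xb : Eucl n) (N : Set (Eucl n)) (hN : volume N = 0) (r : ℝ) :
    ∀ᵐ x ∂(volume.restrict (Metric.ball xb r)),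
      ∀ᵐ s ∂(volume.restrict (Set.Ioo (0:ℝ) 1)), xb + s • (x - xb) ∉ N := by
  obtain ⟨N', hNN', hN'meas, hN'0⟩ := exists_measurable_superset_of_null hN
  have main : ∀ᵐ x ∂(volume.restrict (Metric.ball xb r)),
      ∀ᵐ s ∂(volume.restrict (Set.Ioo (0:ℝ) 1)), xb + s • (x - xb) ∉ N' := by
    set T : Eucl n × ℝ → Eucl n := fun p => xb + p.2 • (p.1 - xb) with hT
    have hTcont : Continuous T := by fun_prop
    set g : Eucl n × ℝ → ℝ≥0∞ := fun p => N'.indicator 1 (T p) with hg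
    have hgmeas : Measurable g :=
      (measurable_one.indicator hN'meas).comp hTcont.measurable
    have hinner : ∀ s ∈ Set.Ioo (0:ℝ) 1,
        (∫⁻ x, g (x, s) ∂(volume.restrict (Metric.ball xb r))) = 0 := by
      intro s hs
      have hs0 : s ≠ 0 := ne_of_gt hs.1
      have hprecont : Continuous (fun x : Eucl n => xb + s • (x - xb)) := by fun_prop
      have hpremeas : MeasurableSet ((fun x : Eucl n => xb + s • (x - xb)) ⁻¹' N') :=
        hN'meas.preimage hprecont.measurable
      have hpre : volume ((fun x : Eucl n => xb + s • (x - xb)) ⁻¹' N') = 0 := by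
        have hcomp : (fun x : Eucl n => xb + s • (x - xb))
            = (fun z => (xb - s • xb) + z) ∘ (fun x : Eucl n => s • x) := by
          funext x
          simp [smul_sub, Function.comp]
          abel
        rw [hcomp, Set.preimage_comp, Measure.addHaar_preimage_smul volume hs0]
        rw [measure_preimage_add volume _ N', hN'0, mul_zero]
      have hrw : ∀ x : Eucl n, g (x, s)
          = ((fun x : Eucl n => xb + s • (x - xb)) ⁻¹' N').indicator 1 x := by
        intro x
        by_cases hmem : xb + s • (x - xb) ∈ N' <;>
          simp [hg, hT, Set.indicator_apply, Set.mem_preimage, hmem]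
      refine le_antisymm ?_ (zero_le)
      calc (∫⁻ x, g (x, s) ∂(volume.restrict (Metric.ball xb r)))
          ≤ ∫⁻ x, g (x, s) := MeasureTheory.setLIntegral_le_lintegral _ _
        _ = volume ((fun x : Eucl n => xb + s • (x - xb)) ⁻¹' N') := by
            simp_rw [hrw]
            rw [lintegral_indicator_one hpremeas]
        _ = 0 := hpre
    have hswap := MeasureTheory.lintegral_lintegral_swap
      (μ := volume.restrict (Metric.ball xb r)) (ν := volume.restrict (Set.Ioo (0:ℝ) 1))
      (f := fun x s => g (x, s)) hgmeas.aemeasurable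
    have hright : (∫⁻ s, ∫⁻ x, g (x, s) ∂(volume.restrict (Metric.ball xb r)) ∂(volume.restrict (Set.Ioo (0:ℝ) 1))) = 0 := by
      have hae : ∀ᵐ s ∂(volume.restrict (Set.Ioo (0:ℝ) 1)),
          (∫⁻ x, g (x, s) ∂(volume.restrict (Metric.ball xb r))) = 0 :=
        (ae_restrict_iff' measurableSet_Ioo).2 (Filter.Eventually.of_forall hinner)
      rw [lintegral_congr_ae hae, lintegral_zero]
    have hleft : (∫⁻ x, ∫⁻ s, g (x, s) ∂(volume.restrict (Set.Ioo (0:ℝ) 1)) ∂(volume.restrict (Metric.ball xb r))) = 0 := by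
      rw [hswap]; exact hright
    have hFmeas : Measurable (fun x => ∫⁻ s, g (x, s) ∂(volume.restrict (Set.Ioo (0:ℝ) 1))) :=
      Measurable.lintegral_prod_right hgmeas
    have hae0 : ∀ᵐ x ∂(volume.restrict (Metric.ball xb r)),
        (∫⁻ s, g (x, s) ∂(volume.restrict (Set.Ioo (0:ℝ) 1))) = 0 :=
      (lintegral_eq_zero_iff hFmeas).1 hleft
    filter_upwards [hae0] with x hx
    have hgx : Measurable (fun s => g (x, s)) :=
      hgmeas.comp (measurable_const.prodMk measurable_id)
    have := (lintegral_eq_zero_iff hgx).1 hx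
    filter_upwards [this] with s hgs
    intro hmem
    rw [hg] at hgs
    simp only [hT] at hgs
    rw [Set.indicator_of_mem hmem] at hgs
    simp at hgs
  filter_upwards [main] with x hx
  filter_upwards [hx] with s hs
  exact fun hmem => hs (hNN' hmem)

lemma aux_real_cancel (a : ℝ) (x : EReal) : ((-a : ℝ) : EReal) + ((a : EReal) + x) = x := by
  induction x with
  | bot => simp [EReal.add_bot]
  | coe y => norm_cast; ring
  | top =>
    rw [EReal.add_top_of_ne_bot (by simp : ((a:ℝ):EReal) ≠ ⊥), EReal.add_top_of_ne_bot (by simp)]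

lemma aux_liminf_const_add {α : Type*} {F : Filter α} [F.NeBot] (u : α → ℝ) (g : α → EReal)
    (L : ℝ) (hu : Tendsto u F (𝓝 L)) :
    Filter.liminf (fun p => (u p : EReal) + g p) F = (L : EReal) + Filter.liminf g F := by
  have hcoe : Tendsto (fun p => ((u p : ℝ) : EReal)) F (𝓝 ((L : ℝ) : EReal)) :=
    (continuous_coe_real_ereal.continuousAt).tendsto.comp hu
  have hliminf_u : Filter.liminf (fun p => ((u p : ℝ) : EReal)) F = (L : EReal) :=
    hcoe.liminf_eq
  have hncoe : Tendsto (fun p => ((-u p : ℝ) : EReal)) F (𝓝 ((-L : ℝ) : EReal)) :=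
    (continuous_coe_real_ereal.continuousAt).tendsto.comp (hu.neg)
  have hliminf_nu : Filter.liminf (fun p => ((-u p : ℝ) : EReal)) F = ((-L : ℝ) : EReal) :=
    hncoe.liminf_eq
  apply le_antisymm
  · -- liminf (u + g) ≤ L + liminf g
    have h1 := EReal.le_liminf_add (f := F) (u := fun p => ((-u p : ℝ) : EReal))
      (v := fun p => (u p : EReal) + g p)
    rw [hliminf_nu] at h1
    have h2 : (fun p => ((-u p : ℝ) : EReal)) + (fun p => (u p : EReal) + g p) = g := by
      funext p
      simp only [Pi.add_apply]
      exact aux_real_cancel (u p) (g p)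
    rw [h2] at h1
    -- h1 : (-L) + liminf (u+g) ≤ liminf g
    have h3 := add_le_add (le_refl ((L : ℝ) : EReal)) h1
    calc Filter.liminf (fun p => (u p : EReal) + g p) F
        = ((L:ℝ) : EReal) + (((-L:ℝ) : EReal) + Filter.liminf (fun p => (u p : EReal) + g p) F) := by
          have := aux_real_cancel (-L) (Filter.liminf (fun p => (u p : EReal) + g p) F)
          simp only [neg_neg] at this
          exact this.symm
      _ ≤ ((L:ℝ) : EReal) + Filter.liminf g F := h3
  · have h1 := EReal.le_liminf_add (f := F) (u := fun p => ((u p : ℝ) : EReal)) (v := g)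
    rw [hliminf_u] at h1
    exact h1

/-- Second-order Taylor expansion for extended-sense twice differentiable functions. -/
lemma aux_taylor {n : ℕ} (f : Eucl n → ℝ) (xb Df : Eucl n) (A : Eucl n →L[ℝ] Eucl n)
    (U D : Set (Eucl n)) (K : NNReal) (G : Eucl n → Eucl n)
    (hU : U ∈ 𝓝 xb) (hDU : D ⊆ U) (hnull : volume (U \ D) = 0)
    (hlip : LipschitzOnWith K f U)
    (hG : ∀ y ∈ D, HasGradientAt f (G y) y)
    (hA : Tendsto (fun y => (‖y - xb‖⁻¹ : ℝ) • (G y - Df - A (y - xb))) (𝓝[D \ {xb}] xb) (𝓝 0))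
    {ε : ℝ} (hε : 0 < ε) :
    ∃ r > 0, ∀ x : Eucl n, ‖x - xb‖ < r →
      |f x - f xb - ⟪Df, x - xb⟫ - ⟪x - xb, A (x - xb)⟫ / 2| ≤ ε * ‖x - xb‖^2 := by
  -- Step 1: choose r₁ with ball ⊆ U and gradient estimate on D near xb
  have hA' : ∀ᶠ y in 𝓝[D \ {xb}] xb, ‖G y - Df - A (y - xb)‖ ≤ ε/2 * ‖y - xb‖ := by
    have := (hA.eventually (Metric.ball_mem_nhds (0 : Eucl n) (half_pos hε)))
    filter_upwards [this, self_mem_nhdsWithin] with y hy hyD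
    have hyne : y ≠ xb := by
      intro h; exact hyD.2 (by simp [h])
    have hnorm : ‖y - xb‖ ≠ 0 := by
      simp [sub_eq_zero, hyne]
    rw [dist_zero_right, norm_smul, Real.norm_eq_abs,
      abs_inv, abs_of_nonneg (norm_nonneg _)] at hy
    have hpos : 0 < ‖y - xb‖ := lt_of_le_of_ne (norm_nonneg _) (Ne.symm hnorm)
    have h3 := mul_lt_mul_of_pos_left hy hpos
    rw [← mul_assoc, mul_inv_cancel₀ hnorm, one_mul] at h3
    nlinarith [h3]
  rw [eventually_nhdsWithin_iff] at hA'
  obtain ⟨r₀, hr₀pos, hr₀⟩ := Metric.eventually_nhds_iff_ball.1 hA'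
  obtain ⟨r₁, hr₁pos, hr₁U⟩ := Metric.mem_nhds_iff.1 hU
  set r := min r₀ r₁ with hr
  have hrpos : 0 < r := lt_min hr₀pos hr₁pos
  have hball : Metric.ball xb r ⊆ U := fun y hy => hr₁U (Metric.ball_subset_ball (min_le_right _ _) hy)
  have hgrad : ∀ y ∈ D, y ≠ xb → ‖y - xb‖ < r → ‖G y - Df - A (y - xb)‖ ≤ ε/2 * ‖y - xb‖ := by
    intro y hyD hyne hynorm
    exact hr₀ y (by rw [Metric.mem_ball, dist_eq_norm]; exact lt_of_lt_of_le hynorm (min_le_left _ _))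
      ⟨hyD, by simp [hyne]⟩
  -- the error function
  set e : Eucl n → ℝ := fun x => f x - f xb - ⟪Df, x - xb⟫ - ⟪x - xb, A (x - xb)⟫ / 2 with he
  -- Step 2: the bound on "good" points
  have hgood : ∀ x : Eucl n, ‖x - xb‖ < r →
      (∀ᵐ s ∂(volume.restrict (Set.Ioo (0:ℝ) 1)), xb + s • (x - xb) ∈ D) →
      |e x| ≤ ε/2 * ‖x - xb‖^2 := by
    intro x hxr hxgood
    rcases eq_or_ne x xb with rfl | hxne
    · simp [he]
    set u := x - xb with hu
    have hune : u ≠ 0 := sub_ne_zero.2 hxne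
    have hupos : 0 < ‖u‖ := norm_pos_iff.2 hune
    -- clamp function
    set π : ℝ → ℝ := fun s => Subtype.val (Set.projIcc (0:ℝ) 1 zero_le_one s) with hπ
    have hπlip : LipschitzWith 1 π := by have h := (LipschitzWith.subtype_val _).comp (LipschitzWith.projIcc zero_le_one); rw [mul_one] at h; exact h
    have hπmem : ∀ s, π s ∈ Set.Icc (0:ℝ) 1 := fun s => (Set.projIcc (0:ℝ) 1 zero_le_one s).2
    have hπ0 : π 0 = 0 := by simp [hπ]
    have hπ1 : π 1 = 1 := by simp [hπ]
    have hπid : ∀ s ∈ Set.Ioo (0:ℝ) 1, π s = s := fun s hs => by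
      simp [hπ, Set.projIcc_of_mem zero_le_one (Set.mem_Icc_of_Ioo hs)]
    -- curve into the ball
    set c : ℝ → Eucl n := fun s => xb + (π s) • u with hc
    have hcmem : ∀ s, c s ∈ U := by
      intro s
      apply hball
      rw [Metric.mem_ball, dist_eq_norm, hc]
      simp only [add_sub_cancel_left]
      rw [norm_smul, Real.norm_eq_abs, abs_of_nonneg (hπmem s).1]
      have hle : π s * ‖u‖ ≤ ‖u‖ := by
        nlinarith [(hπmem s).1, (hπmem s).2, norm_nonneg u]
      exact lt_of_le_of_lt hle hxr
    have hclip : LipschitzWith (1 * ‖u‖₊) c := by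
      have h1 : LipschitzWith ‖u‖₊ (fun a : ℝ => xb + a • u) := by
        apply LipschitzWith.of_dist_le_mul
        intro a b
        simp only [dist_eq_norm]
        rw [add_sub_add_left_eq_sub, ← sub_smul, norm_smul]
        simp [Real.norm_eq_abs, Real.dist_eq, mul_comm]
      rw [one_mul]; have h := h1.comp hπlip; rw [mul_one] at h; exact h
    -- the scalar function h
    set a : ℝ := ⟪Df, u⟫ with ha
    set b : ℝ := ⟪u, A u⟫ with hb
    set h : ℝ → ℝ := fun s => f (c s) - (π s) * a - (π s)^2 / 2 * b with hh
    -- Lipschitz of h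
    have hflip : LipschitzWith (K * (1 * ‖u‖₊)) (f ∘ c) := by
      rw [← lipschitzOnWith_univ] at hclip ⊢
      exact hlip.comp hclip (fun s _ => hcmem s)
    have hπdist : ∀ s t : ℝ, |π s - π t| ≤ dist s t := by
      intro s t
      simpa [Real.dist_eq] using hπlip.dist_le_mul s t
    have hpoly1 : LipschitzWith (‖a‖₊) (fun s => (π s) * a) := by
      apply LipschitzWith.of_dist_le_mul
      intro s t
      calc dist (π s * a) (π t * a) = |π s - π t| * |a| := by
            rw [Real.dist_eq, ← sub_mul, abs_mul]
        _ ≤ dist s t * |a| := mul_le_mul_of_nonneg_right (hπdist s t) (abs_nonneg a)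
        _ = ↑‖a‖₊ * dist s t := by rw [coe_nnnorm, Real.norm_eq_abs]; ring
    have hpoly2 : LipschitzWith (‖b‖₊) (fun s => (π s)^2 / 2 * b) := by
      apply LipschitzWith.of_dist_le_mul
      intro s t
      have hfactor : (π s)^2/2*b - (π t)^2/2*b = (π s - π t) * ((π s + π t)/2 * b) := by ring
      have hb2 : |(π s + π t)/2 * b| ≤ |b| := by
        rw [abs_mul]
        have h1 : |(π s + π t)/2| ≤ 1 := by
          rw [abs_le]
          constructor <;> nlinarith [(hπmem s).1, (hπmem s).2, (hπmem t).1, (hπmem t).2]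
        nlinarith [abs_nonneg ((π s + π t)/2), abs_nonneg b]
      calc dist ((π s)^2/2*b) ((π t)^2/2*b) = |π s - π t| * |(π s + π t)/2 * b| := by
            rw [Real.dist_eq, hfactor, abs_mul]
        _ ≤ dist s t * |b| := mul_le_mul (hπdist s t) hb2 (abs_nonneg _) dist_nonneg
        _ = ↑‖b‖₊ * dist s t := by rw [coe_nnnorm, Real.norm_eq_abs]; ring
    have hhlip : LipschitzWith (K * (1 * ‖u‖₊) + ‖a‖₊ + ‖b‖₊) h := by
      exact (hflip.sub hpoly1).sub hpoly2
    -- a.e. derivative bound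
    have hderiv : ∀ᵐ s ∂(volume.restrict (Set.Ioo (0:ℝ) 1)),
        ∃ d : ℝ, HasDerivAt h d s ∧ |d| ≤ ε/2 * ‖u‖^2 := by
      filter_upwards [hxgood, ae_restrict_mem measurableSet_Ioo] with s hsD hsIoo
      set y : Eucl n := xb + s • u with hy
      have hyD : y ∈ D := hsD
      have hysub : y - xb = s • u := by rw [hy]; abel
      have hyne : y ≠ xb := by
        intro hcon
        have h0 : s • u = 0 := by rw [← hysub, hcon]; simp
        rcases smul_eq_zero.1 h0 with h' | h'
        · exact hsIoo.1.ne' h'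
        · exact hune h'
      have hynorm' : ‖y - xb‖ = s * ‖u‖ := by
        rw [hysub, norm_smul, Real.norm_eq_abs, abs_of_pos hsIoo.1]
      have hynorm : ‖y - xb‖ < r := by
        rw [hynorm']
        have hle : s * ‖u‖ ≤ ‖u‖ := by
          nlinarith [hsIoo.1, hsIoo.2, hupos]
        exact lt_of_le_of_lt hle hxr
      have hbound := hgrad y hyD hyne hynorm
      have hline : HasDerivAt (fun t : ℝ => xb + t • u) u s := by
        simpa using ((hasDerivAt_id s).smul_const u).const_add xb
      have hfd : HasFDerivAt f (InnerProductSpace.toDual ℝ (Eucl n) (G y)) y :=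
        hasGradientAt_iff_hasFDerivAt.1 (hG y hyD)
      have hf' : HasDerivAt (fun t : ℝ => f (xb + t • u)) ⟪G y, u⟫ s := by
        have := hfd.comp_hasDerivAt s hline
        simpa [InnerProductSpace.toDual_apply_apply, Function.comp_def] using this
      have h2 : HasDerivAt (fun t : ℝ => t * a) a s := by
        simpa using (hasDerivAt_id s).mul_const a
      have h3 : HasDerivAt (fun t : ℝ => t^2/2*b) (s*b) s := by
        have h3' := ((hasDerivAt_pow 2 s).div_const 2).mul_const b
        exact h3'.congr_deriv (by push_cast; ring)
      have hH : HasDerivAt (fun t : ℝ => f (xb + t • u) - t * a - t^2/2*b)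
          (⟪G y, u⟫ - a - s * b) s := (hf'.sub h2).sub h3
      have hev : (fun t : ℝ => f (xb + t • u) - t * a - t^2/2*b) =ᶠ[𝓝 s] h := by
        filter_upwards [Ioo_mem_nhds hsIoo.1 hsIoo.2] with t ht
        simp [hh, hc, hπid t ht]
      refine ⟨⟪G y, u⟫ - a - s * b, hH.congr_of_eventuallyEq hev.symm, ?_⟩
      have hid : ⟪G y, u⟫ - a - s*b = ⟪G y - Df - A (y - xb), u⟫ := by
        have e1 : ⟪G y - Df - A (y - xb), u⟫ = ⟪G y, u⟫ - ⟪Df, u⟫ - ⟪A (y - xb), u⟫ := by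
          rw [inner_sub_left, inner_sub_left]
        have e2 : ⟪A (y - xb), u⟫ = s * ⟪u, A u⟫ := by
          rw [hysub, A.map_smul, real_inner_smul_left, real_inner_comm u (A u)]
        rw [e1, e2, ha, hb]
      rw [hid]
      calc |⟪G y - Df - A (y - xb), u⟫| ≤ ‖G y - Df - A (y - xb)‖ * ‖u‖ :=
            abs_real_inner_le_norm _ _
        _ ≤ (ε/2 * ‖y - xb‖) * ‖u‖ := mul_le_mul_of_nonneg_right hbound (norm_nonneg _)
        _ ≤ ε/2 * ‖u‖^2 := by
            rw [hynorm']
            have hss : s * ‖u‖ ≤ ‖u‖ := by nlinarith [hsIoo.1, hsIoo.2, hupos]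
            have h4 := mul_le_mul_of_nonneg_left hss (le_of_lt (half_pos hε))
            have h5 := mul_le_mul_of_nonneg_right h4 (norm_nonneg u)
            calc ε/2 * (s*‖u‖) * ‖u‖ ≤ ε/2 * ‖u‖ * ‖u‖ := h5
              _ = ε/2 * ‖u‖^2 := by ring
    have hkey := aux_ftc_bound h _ hhlip (ε/2 * ‖u‖^2) hderiv
    have h1v : h 1 = f x - a - b/2 := by
      have : c 1 = x := by rw [hc]; simp [hπ1, hu]
      rw [hh]
      simp only [this, hπ1]
      ring
    have h0v : h 0 = f xb := by
      have : c 0 = xb := by rw [hc]; simp [hπ0]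
      rw [hh]
      simp only [this, hπ0]
      ring
    have hex : e x = h 1 - h 0 := by
      rw [h1v, h0v, he, ha, hb, hu]
      ring
    rw [hex]
    exact hkey
  -- Step 3: density of good points and conclusion
  refine ⟨r, hrpos, ?_⟩
  intro x hxr
  have hxball : x ∈ Metric.ball xb r := by rw [Metric.mem_ball, dist_eq_norm]; exact hxr
  have hecont : ContinuousOn e (Metric.ball xb r) := by
    have hf : ContinuousOn f (Metric.ball xb r) := (hlip.mono hball).continuousOn
    have hg : Continuous (fun z : Eucl n => f xb + ⟪Df, z - xb⟫ + ⟪z - xb, A (z - xb)⟫/2) := by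
      have h1 : Continuous fun z : Eucl n => z - xb := continuous_id.sub continuous_const
      exact (continuous_const.add (continuous_const.inner h1)).add
        ((h1.inner (A.continuous.comp h1)).div_const 2)
    have hrepr : e = fun z => f z - (f xb + ⟪Df, z - xb⟫ + ⟪z - xb, A (z - xb)⟫/2) := by
      funext z; rw [he]; ring
    rw [hrepr]
    exact hf.sub hg.continuousOn
  have hae := aux_good_ae xb (U \ D) hnull r
  have hseg : ∀ z ∈ Metric.ball xb r,
      (∀ᵐ s ∂(volume.restrict (Set.Ioo (0:ℝ) 1)), xb + s • (z - xb) ∉ U \ D) →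
      (∀ᵐ s ∂(volume.restrict (Set.Ioo (0:ℝ) 1)), xb + s • (z - xb) ∈ D) := by
    intro z hz hgz
    filter_upwards [hgz, ae_restrict_mem measurableSet_Ioo] with s hs hsIoo
    have hzr : ‖z - xb‖ < r := by rw [← dist_eq_norm]; exact hz
    have hmem : xb + s • (z - xb) ∈ U := by
      apply hball
      rw [Metric.mem_ball, dist_eq_norm]
      simp only [add_sub_cancel_left]
      rw [norm_smul, Real.norm_eq_abs, abs_of_pos hsIoo.1]
      nlinarith [hsIoo.1, hsIoo.2, norm_nonneg (z - xb)]
    by_contra hD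
    exact hs ⟨hmem, hD⟩
  -- find good approximating points
  have hgoodpt : ∀ δ : ℝ, 0 < δ → ∃ z : Eucl n, dist z x < δ ∧ z ∈ Metric.ball xb r ∧
      (∀ᵐ s ∂(volume.restrict (Set.Ioo (0:ℝ) 1)), xb + s • (z - xb) ∉ U \ D) := by
    intro δ hδ
    set δ' : ℝ := min δ (r - ‖x - xb‖) with hδ'def
    have hδ'pos : 0 < δ' := lt_min hδ (by linarith)
    have hsub : Metric.ball x δ' ⊆ Metric.ball xb r := by
      intro z hz
      rw [Metric.mem_ball] at hz ⊢
      have h1 : dist z xb ≤ dist z x + dist x xb := dist_triangle _ _ _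
      have h2 : dist x xb = ‖x - xb‖ := dist_eq_norm _ _
      have h3 : δ' ≤ r - ‖x - xb‖ := min_le_right _ _
      linarith
    by_contra hcon
    push_neg at hcon
    have hsubbad : Metric.ball x δ' ⊆
        {z : Eucl n | ¬ (∀ᵐ s ∂(volume.restrict (Set.Ioo (0:ℝ) 1)), xb + s • (z - xb) ∉ U \ D)} := by
      intro z hz
      intro hP
      exact hcon z (lt_of_lt_of_le (Metric.mem_ball.1 hz) (min_le_left _ _)) (hsub hz) hP
    have hball0 : volume.restrict (Metric.ball xb r) (Metric.ball x δ') = 0 := by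
      apply measure_mono_null hsubbad
      exact hae
    rw [Measure.restrict_apply Metric.isOpen_ball.measurableSet,
      Set.inter_eq_self_of_subset_left hsub] at hball0
    exact (Metric.measure_ball_pos volume x hδ'pos).ne' hball0
  -- extract a sequence
  have hz : ∀ k : ℕ, ∃ z : Eucl n, dist z x < ((k:ℝ)+1)⁻¹ ∧ z ∈ Metric.ball xb r ∧
      (∀ᵐ s ∂(volume.restrict (Set.Ioo (0:ℝ) 1)), xb + s • (z - xb) ∉ U \ D) :=
    fun k => hgoodpt _ (by positivity)
  choose z hz1 hz2 hz3 using hz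
  have hzlim : Tendsto z atTop (𝓝 x) := by
    rw [tendsto_iff_dist_tendsto_zero]
    apply squeeze_zero (fun k => dist_nonneg) (fun k => le_of_lt (hz1 k))
    exact tendsto_one_div_add_atTop_nhds_zero_nat.congr (fun k => by rw [one_div])
  have hbd : ∀ k, |e (z k)| ≤ ε/2 * ‖z k - xb‖^2 := by
    intro k
    apply hgood (z k) (by rw [← dist_eq_norm]; exact hz2 k)
    exact hseg (z k) (hz2 k) (hz3 k)
  have hlim1 : Tendsto (fun k => |e (z k)|) atTop (𝓝 |e x|) := by
    have hcx : ContinuousAt e x := hecont.continuousAt (Metric.isOpen_ball.mem_nhds hxball)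
    exact (continuous_abs.continuousAt.comp (hcx)).tendsto.comp hzlim
  have hlim2 : Tendsto (fun k => ε/2 * ‖z k - xb‖^2) atTop (𝓝 (ε/2 * ‖x - xb‖^2)) := by
    have : Continuous (fun w : Eucl n => ε/2 * ‖w - xb‖^2) := by fun_prop
    exact (this.continuousAt).tendsto.comp hzlim
  have hfinal : |e x| ≤ ε/2 * ‖x - xb‖^2 := le_of_tendsto_of_tendsto' hlim1 hlim2 hbd
  have : e x = f x - f xb - ⟪Df, x - xb⟫ - ⟪x - xb, A (x - xb)⟫ / 2 := by rw [he]
  rw [← this]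
  calc |e x| ≤ ε/2 * ‖x - xb‖^2 := hfinal
    _ ≤ ε * ‖x - xb‖^2 := by nlinarith [sq_nonneg ‖x - xb‖, hε]

end AuxProofs

/-- sum rule for the second subderivative:
`d²(φ+ψ)(xb|vb)(w) = ⟨w, ∇²φ(xb)w⟩ + d²ψ(xb|vb−∇φ(xb))(w)`. -/
theorem statement2 {n : ℕ} (φ ψ : Eucl n → EReal)
    (hφbot : ∀ x, φ x ≠ ⊥) (hψbot : ∀ x, ψ x ≠ ⊥)
    (xb Dφ : Eucl n) (A : Eucl n →L[ℝ] Eucl n)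
    (hφ : TwiceDiffExt φ xb Dφ A)
    (hψfin : ψ xb ≠ ⊤)
    (hψlsc : ∃ U ∈ 𝓝 xb, ∀ y ∈ U, LowerSemicontinuousAt ψ y)
    (vb : Eucl n) (hvb : vb ∈ limSubdiff (fun x => φ x + ψ x) xb) :
    ∀ w : Eucl n,
      secondSubderiv (fun x => φ x + ψ x) xb vb w
        = ((⟪w, A w⟫ : ℝ) : EReal) + secondSubderiv ψ xb (vb - Dφ) w := by
  intro w
  classical
  obtain ⟨hφfin, hgrad0, U, D, K, G, hU, hDU, hnull, hUfin, hlip, hG, hA⟩ := hφ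
  set f : Eucl n → ℝ := fun y => (φ y).toReal with hf
  have hφeq : ∀ y ∈ U, φ y = ((f y : ℝ) : EReal) := fun y hy =>
    (EReal.coe_toReal (hUfin y hy) (hφbot y)).symm
  have hxbU : xb ∈ U := mem_of_mem_nhds hU
  haveI hFne : ((𝓝[>] (0:ℝ)) ×ˢ 𝓝 w).NeBot := Filter.prod_neBot.2 ⟨inferInstance, inferInstance⟩
  set r : ℝ × Eucl n → ℝ :=
    fun p => (2/p.1^2) * (f (xb + p.1 • p.2) - f xb - p.1 * ⟪Dφ, p.2⟫) with hrdef
  obtain ⟨rU, hrUpos, hrUsub⟩ := Metric.mem_nhds_iff.1 hU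
  -- Claim 1: r tends to ⟪w, A w⟫
  have hclaim1 : Tendsto r ((𝓝[>] (0:ℝ)) ×ˢ 𝓝 w) (𝓝 (⟪w, A w⟫ : ℝ)) := by
    rw [Metric.tendsto_nhds]
    intro ε hε
    have hε4 : 0 < ε/(4*(‖w‖+1)^2+1) := by positivity
    obtain ⟨r₀, hr₀pos, hr₀⟩ := aux_taylor f xb Dφ A U D K G hU hDU hnull hlip hG hA hε4
    have hcontA : Tendsto (fun w' : Eucl n => ⟪w', A w'⟫) (𝓝 w) (𝓝 (⟪w, A w⟫ : ℝ)) := by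
      have : Continuous (fun w' : Eucl n => (⟪w', A w'⟫ : ℝ)) :=
        continuous_id.inner (A.continuous)
      exact this.continuousAt
    have hE2 : ∀ᶠ w' in 𝓝 w, dist w' w < 1 ∧ |⟪w', A w'⟫ - ⟪w, A w⟫| < ε/2 := by
      filter_upwards [Metric.ball_mem_nhds w one_pos,
        hcontA.eventually (Metric.ball_mem_nhds _ (half_pos hε))] with w' h1 h2
      exact ⟨h1, by simpa [Real.dist_eq] using h2⟩
    have hE1 : ∀ᶠ t in 𝓝[>] (0:ℝ), t ∈ Set.Ioo (0:ℝ) (r₀/(‖w‖+1)) :=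
      Ioo_mem_nhdsGT_of_mem ⟨le_refl _, by positivity⟩
    rw [Filter.eventually_prod_iff]
    refine ⟨_, hE1, _, hE2, ?_⟩
    rintro t ht w' hw'
    obtain ⟨htpos, htlt⟩ := ht
    obtain ⟨hw'1, hw'2⟩ := hw'
    have hw'norm : ‖w'‖ < ‖w‖ + 1 := by
      have hn1 : ‖w'‖ ≤ ‖w‖ + ‖w' - w‖ := by
        simpa using norm_add_le w (w' - w)
      rw [dist_eq_norm] at hw'1
      linarith
    have hxnorm : ‖(xb + t • w') - xb‖ < r₀ := by
      have hee0 : (xb + t • w') - xb = t • w' := by abel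
      rw [hee0, norm_smul, Real.norm_eq_abs, abs_of_pos htpos]
      have h1 : t * ‖w'‖ ≤ t * (‖w‖ + 1) :=
        mul_le_mul_of_nonneg_left (le_of_lt hw'norm) (le_of_lt htpos)
      have h2 : t * (‖w‖ + 1) < r₀ :=
        (lt_div_iff₀ (by positivity : (0:ℝ) < ‖w‖ + 1)).1 htlt
      linarith
    have hbd := hr₀ (xb + t • w') hxnorm
    have hee : (xb + t • w') - xb = t • w' := by abel
    rw [hee] at hbd
    have hdecomp : r (t, w') - ⟪w, A w⟫
        = (2/t^2) * (f (xb + t • w') - f xb - ⟪Dφ, t • w'⟫ - ⟪t • w', A (t • w')⟫/2)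
          + (⟪w', A w'⟫ - ⟪w, A w⟫) := by
      rw [hrdef]
      have e1 : ⟪Dφ, t • w'⟫ = t * ⟪Dφ, w'⟫ := real_inner_smul_right _ _ _
      have e2 : (⟪t • w', A (t • w')⟫ : ℝ) = t^2 * ⟪w', A w'⟫ := by
        rw [A.map_smul, real_inner_smul_left, real_inner_smul_right]
        ring
      simp only [e1, e2]
      field_simp
      ring
    have hnsm : ‖t • w'‖ = t * ‖w'‖ := by
      rw [norm_smul, Real.norm_eq_abs, abs_of_pos htpos]
    rw [Real.dist_eq, hdecomp]
    have hterm1 : |(2/t^2) * (f (xb + t • w') - f xb - ⟪Dφ, t • w'⟫ - ⟪t • w', A (t • w')⟫/2)|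
        ≤ ε/2 := by
      rw [abs_mul, abs_of_pos (by positivity : (0:ℝ) < 2/t^2)]
      calc (2/t^2) * |f (xb + t • w') - f xb - ⟪Dφ, t • w'⟫ - ⟪t • w', A (t • w')⟫/2|
          ≤ (2/t^2) * (ε/(4*(‖w‖+1)^2+1) * ‖t • w'‖^2) := by
            exact mul_le_mul_of_nonneg_left hbd (by positivity)
        _ = 2 * (ε/(4*(‖w‖+1)^2+1)) * ‖w'‖^2 := by
            rw [hnsm]
            field_simp
        _ ≤ ε/2 := by
            have h1 : ‖w'‖^2 ≤ (‖w‖+1)^2 := by nlinarith [norm_nonneg w', hw'norm]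
            have hQ : (0:ℝ) < 4*(‖w‖+1)^2+1 := by positivity
            have hqnn : 0 ≤ ε/(4*(‖w‖+1)^2+1) := by positivity
            have hq : (ε/(4*(‖w‖+1)^2+1)) * (4*(‖w‖+1)^2+1) = ε :=
              div_mul_cancel₀ _ (ne_of_gt hQ)
            nlinarith [mul_nonneg hqnn (sub_nonneg.2 h1)]
    calc |(2/t^2) * (f (xb + t • w') - f xb - ⟪Dφ, t • w'⟫ - ⟪t • w', A (t • w')⟫/2)
          + (⟪w', A w'⟫ - ⟪w, A w⟫)|
        ≤ |(2/t^2) * (f (xb + t • w') - f xb - ⟪Dφ, t • w'⟫ - ⟪t • w', A (t • w')⟫/2)|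
          + |⟪w', A w'⟫ - ⟪w, A w⟫| := abs_add_le _ _
      _ < ε/2 + ε/2 := by
          exact add_lt_add_of_le_of_lt hterm1 hw'2
      _ = ε := by ring
  -- Claim 2: eventual splitting
  have hsplit : ∀ᶠ p in (𝓝[>] (0:ℝ)) ×ˢ 𝓝 w,
      ssdQuot (fun x => φ x + ψ x) xb vb p.1 p.2
        = ((r p : ℝ) : EReal) + ssdQuot ψ xb (vb - Dφ) p.1 p.2 := by
    have hE1 : ∀ᶠ t in 𝓝[>] (0:ℝ), t ∈ Set.Ioo (0:ℝ) (rU/(‖w‖+1)) :=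
      Ioo_mem_nhdsGT_of_mem ⟨le_refl _, by positivity⟩
    have hE2 : ∀ᶠ w' in 𝓝 w, dist w' w < 1 := Metric.ball_mem_nhds w one_pos
    rw [Filter.eventually_prod_iff]
    refine ⟨_, hE1, _, hE2, ?_⟩
    rintro t ht w' hw'1
    obtain ⟨htpos, htlt⟩ := ht
    have hw'norm : ‖w'‖ < ‖w‖ + 1 := by
      have hn1 : ‖w'‖ ≤ ‖w‖ + ‖w' - w‖ := by
        simpa using norm_add_le w (w' - w)
      rw [dist_eq_norm] at hw'1
      linarith
    have hxU : xb + t • w' ∈ U := by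
      apply hrUsub
      rw [Metric.mem_ball, dist_eq_norm]
      have hee : (xb + t • w') - xb = t • w' := by abel
      rw [hee, norm_smul, Real.norm_eq_abs, abs_of_pos htpos]
      have h1 : t * ‖w'‖ ≤ t * (‖w‖ + 1) :=
        mul_le_mul_of_nonneg_left (le_of_lt hw'norm) (le_of_lt htpos)
      have h2 : t * (‖w‖ + 1) < rU :=
        (lt_div_iff₀ (by positivity : (0:ℝ) < ‖w‖ + 1)).1 htlt
      linarith
    have hφx := hφeq _ hxU
    have hφxb := hφeq _ hxbU
    have hψxb : ψ xb = (((ψ xb).toReal : ℝ) : EReal) := (EReal.coe_toReal hψfin (hψbot xb)).symm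
    have hcpos : (0:EReal) < ((2/t^2 : ℝ) : EReal) := by
      rw [← EReal.coe_zero]
      exact EReal.coe_lt_coe_iff.2 (by positivity)
    rw [ssdQuot, ssdQuot]
    simp only
    rcases eq_or_ne (ψ (xb + t • w')) ⊤ with hψx | hψx
    · rw [hψx, hφx, hφxb, hψxb]
      rw [hrdef]
      have l1 : ((f (xb + t • w') : ℝ) : EReal) + ⊤ = ⊤ := EReal.coe_add_top _
      rw [l1]
      have l2 : (((f xb : ℝ) : EReal) + (((ψ xb).toReal : ℝ) : EReal)) = ((f xb + (ψ xb).toReal : ℝ) : EReal) := by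
        norm_cast
      rw [l2]
      rw [EReal.top_sub_coe, EReal.top_sub_coe]
      rw [EReal.mul_top_of_pos hcpos]
      have l3 : (((ψ xb).toReal : ℝ) : EReal) ≠ ⊥ := by simp
      have l4 : ⊤ - (((ψ xb).toReal : ℝ) : EReal) = ⊤ := EReal.top_sub_coe _
      rw [l4, EReal.top_sub_coe, EReal.mul_top_of_pos hcpos, EReal.coe_add_top]
    · have hψx' : ψ (xb + t • w') = (((ψ (xb + t • w')).toReal : ℝ) : EReal) :=
        (EReal.coe_toReal hψx (hψbot _)).symm
      rw [hφx, hφxb, hψxb, hψx', hrdef]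
      have hinner : (⟪vb, w'⟫ : ℝ) = ⟪Dφ, w'⟫ + ⟪vb - Dφ, w'⟫ := by
        rw [inner_sub_left]
        ring
      norm_cast
      rw [hinner]
      ring
  -- conclude
  have hre : secondSubderiv (fun x => φ x + ψ x) xb vb w
      = Filter.liminf (fun p : ℝ × Eucl n => ((r p : ℝ) : EReal)
          + ssdQuot ψ xb (vb - Dφ) p.1 p.2) ((𝓝[>] (0:ℝ)) ×ˢ 𝓝 w) := by
    rw [secondSubderiv]
    exact Filter.liminf_congr hsplit
  rw [hre, aux_liminf_const_add r _ _ hclaim1]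
  rfl
end

section
/- Let f: ℝⁿ → ℝ∪{+∞} be a proper lower semicontinuous convex function with f(x̄) finite, let v̄ ∈ ∂f(x̄), let w ∈ K_f(x̄,v̄) := {w | df(x̄)(w) = ⟨v̄,w⟩}, and assume f is parabolically epi-differentiable at x̄ for w. Then the function z ↦ d²f(x̄)(w|z) is proper, lower semicontinuous, and convex on ℝⁿ. -/
open Filter Topology MeasureTheory Set RealInnerProductSpace

section MyHelpers

lemma myMulNeBot {r : ℝ} (hr : 0 < r) {Q : EReal} (hQ : Q ≠ ⊥) : (r : EReal) * Q ≠ ⊥ := by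
  induction Q using EReal.rec with
  | bot => exact absurd rfl hQ
  | coe q => rw [← EReal.coe_mul]; exact EReal.coe_ne_bot _
  | top => rw [EReal.coe_mul_top_of_pos hr]; simp

lemma myAddNeBot {X : EReal} (hX : X ≠ ⊥) (c : ℝ) : X + (c : EReal) ≠ ⊥ := by
  induction X using EReal.rec with
  | bot => exact absurd rfl hX
  | coe x => rw [← EReal.coe_add]; exact EReal.coe_ne_bot _
  | top => rw [EReal.top_add_of_ne_bot (EReal.coe_ne_bot c)]; simp

lemma myMulAdd {r : ℝ} (hr : 0 < r) {P Q : EReal} (hP : P ≠ ⊥) (hQ : Q ≠ ⊥) :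
    (r : EReal) * (P + Q) = (r : EReal) * P + (r : EReal) * Q := by
  induction P using EReal.rec with
  | bot => exact absurd rfl hP
  | coe p =>
    induction Q using EReal.rec with
    | bot => exact absurd rfl hQ
    | coe q => norm_cast; ring
    | top =>
      rw [EReal.add_top_of_ne_bot (EReal.coe_ne_bot p), EReal.coe_mul_top_of_pos hr,
        ← EReal.coe_mul, EReal.add_top_of_ne_bot (EReal.coe_ne_bot _)]
  | top =>
    rw [EReal.top_add_of_ne_bot hQ, EReal.coe_mul_top_of_pos hr,
      EReal.top_add_of_ne_bot (myMulNeBot hr hQ)]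

lemma mySubSub (X : EReal) (c d : ℝ) :
    X - (c : EReal) - (d : EReal) = X + ((-c - d : ℝ) : EReal) := by
  induction X using EReal.rec with
  | bot => simp [sub_eq_add_neg]
  | coe x => norm_cast; ring
  | top => simp [sub_eq_add_neg, ← EReal.coe_neg, EReal.top_add_of_ne_bot (EReal.coe_ne_bot _)]

lemma myLeCoe {x : EReal} {c : ℝ} (h : ∀ ε : ℝ, 0 < ε → x ≤ ((c + ε : ℝ) : EReal)) :
    x ≤ (c : EReal) := by
  have ht : Filter.Tendsto (fun ε : ℝ => ((c + ε : ℝ) : EReal)) (𝓝[>] (0 : ℝ))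
      (𝓝 (c : EReal)) := by
    rw [EReal.tendsto_coe]
    have h0 : Filter.Tendsto (fun ε : ℝ => c + ε) (𝓝 (0 : ℝ)) (𝓝 (c + 0)) :=
      tendsto_const_nhds.add tendsto_id
    simpa using h0.mono_left nhdsWithin_le_nhds
  exact ge_of_tendsto ht (eventually_mem_nhdsWithin.mono fun ε hε => h ε hε)

end MyHelpers

/-- under parabolic epi-differentiability of a proper lsc convex `f`
at `xb` for a critical direction `w`, the parabolic subderivative `z ↦ d²f(xb)(w|z)`
is proper, lower semicontinuous and convex. -/
theorem statement8 {n : ℕ} (f : Eucl n → EReal)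
    (hfbot : ∀ x, f x ≠ ⊥) (hflsc : LowerSemicontinuous f) (hfconv : EConvexOn f)
    (xb : Eucl n) (hfin : f xb ≠ ⊤)
    (vb : Eucl n) (hvb : vb ∈ convexSubdiff f xb)
    (w : Eucl n) (hcrit : subderiv f xb w = ((⟪vb, w⟫ : ℝ) : EReal))
    (hpe : ParaEpiDiff f xb w) :
    (∀ z : Eucl n, parabolicSubderiv f xb w z ≠ ⊥) ∧
    (∃ z : Eucl n, parabolicSubderiv f xb w z ≠ ⊤) ∧
    LowerSemicontinuous (fun z : Eucl n => parabolicSubderiv f xb w z) ∧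
    EConvexOn (fun z : Eucl n => parabolicSubderiv f xb w z) := by
  classical
  obtain ⟨z₀, hz₀⟩ := hpe.1
  have hfb := hfbot xb
  set s : ℝ := ⟪vb, w⟫ with hs
  set fr : ℝ := (f xb).toReal with hfrdef
  have hfx : f xb = (fr : EReal) := (EReal.coe_toReal hfin hfb).symm
  -- formula for the parabolic difference quotient
  have hquot : ∀ (t : ℝ) (z : Eucl n), psdQuot f xb w t z
      = ((2 / t ^ 2 : ℝ) : EReal) *
        (f (xb + t • w + (t ^ 2 / 2) • z) + ((-fr - t * s : ℝ) : EReal)) := by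
    intro t z
    rw [psdQuot, hcrit, hfx, ← EReal.coe_mul, mySubSub]
  -- lower bound by the linear function ⟪vb, ·⟫
  have hlow : ∀ z : Eucl n, ((⟪vb, z⟫ : ℝ) : EReal) ≤ parabolicSubderiv f xb w z := by
    intro z
    have hbound : ∀ᶠ p : ℝ × Eucl n in (𝓝[>] (0 : ℝ)) ×ˢ 𝓝 z,
        ((⟪vb, p.2⟫ : ℝ) : EReal) ≤ psdQuot f xb w p.1 p.2 := by
      filter_upwards [(eventually_mem_nhdsWithin (a := (0:ℝ)) (s := Set.Ioi 0)).prod_inl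
        (𝓝 z)] with p hp
      have ht : (0 : ℝ) < p.1 := hp
      rw [hquot]
      have hsub := hvb (xb + p.1 • w + (p.1 ^ 2 / 2) • p.2)
      have harg : (xb + p.1 • w + (p.1 ^ 2 / 2) • p.2) - xb
          = p.1 • w + (p.1 ^ 2 / 2) • p.2 := by abel
      rw [harg] at hsub
      have hip : ⟪vb, p.1 • w + (p.1 ^ 2 / 2) • p.2⟫
          = p.1 * s + (p.1 ^ 2 / 2) * ⟪vb, p.2⟫ := by
        rw [inner_add_right, real_inner_smul_right, real_inner_smul_right]
      rw [hip, hfx, ← EReal.coe_add] at hsub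
      have h2 := add_le_add_left hsub ((-fr - p.1 * s : ℝ) : EReal)
      rw [← EReal.coe_add] at h2
      have h3 : ((p.1 ^ 2 / 2 * ⟪vb, p.2⟫ : ℝ) : EReal)
          ≤ f (xb + p.1 • w + (p.1 ^ 2 / 2) • p.2) + ((-fr - p.1 * s : ℝ) : EReal) := by
        refine le_trans (le_of_eq ?_) h2
        norm_cast
        ring
      have h4 := mul_le_mul_of_nonneg_left h3
        (by exact_mod_cast (by positivity : (0:ℝ) ≤ 2 / p.1 ^ 2) : (0 : EReal) ≤ ((2 / p.1 ^ 2 : ℝ) : EReal))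
      refine le_trans (le_of_eq ?_) h4
      rw [← EReal.coe_mul]
      norm_cast
      field_simp
    have hl : (𝓝[>] (0 : ℝ)) ×ˢ 𝓝 z ≤ 𝓝 ((0 : ℝ), z) := by
      rw [nhds_prod_eq]
      exact Filter.prod_mono nhdsWithin_le_nhds le_rfl
    have htend : Filter.Tendsto (fun p : ℝ × Eucl n => ((⟪vb, p.2⟫ : ℝ) : EReal))
        ((𝓝[>] (0 : ℝ)) ×ˢ 𝓝 z) (𝓝 ((⟪vb, z⟫ : ℝ) : EReal)) :=
      ((continuous_coe_real_ereal.comp (continuous_const.inner continuous_snd)).tendsto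
        ((0 : ℝ), z)).mono_left hl
    calc ((⟪vb, z⟫ : ℝ) : EReal)
        = Filter.liminf (fun p : ℝ × Eucl n => ((⟪vb, p.2⟫ : ℝ) : EReal))
            ((𝓝[>] (0 : ℝ)) ×ˢ 𝓝 z) := htend.liminf_eq.symm
      _ ≤ parabolicSubderiv f xb w z := Filter.liminf_le_liminf hbound
  have hlowne : ∀ z : Eucl n, parabolicSubderiv f xb w z ≠ ⊥ := fun z =>
    ((EReal.bot_lt_coe _).trans_le (hlow z)).ne'
  -- lower semicontinuity
  have hlsc : LowerSemicontinuous (fun z : Eucl n => parabolicSubderiv f xb w z) := by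
    intro z a ha
    obtain ⟨a', haa', ha'⟩ := exists_between ha
    have hev : ∀ᶠ p : ℝ × Eucl n in (𝓝[>] (0 : ℝ)) ×ˢ 𝓝 z,
        a' < psdQuot f xb w p.1 p.2 :=
      Filter.eventually_lt_of_lt_liminf ha'
    rw [Filter.eventually_prod_iff] at hev
    obtain ⟨pa, hpa, pb, hpb, hpab⟩ := hev
    have hint : interior {z' : Eucl n | pb z'} ∈ 𝓝 z := interior_mem_nhds.2 hpb
    filter_upwards [hint] with z' hz'
    have hpb' : ∀ᶠ y in 𝓝 z', pb y :=
      Filter.mem_of_superset (isOpen_interior.mem_nhds hz') interior_subset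
    have hev' : ∀ᶠ p : ℝ × Eucl n in (𝓝[>] (0 : ℝ)) ×ˢ 𝓝 z',
        a' ≤ psdQuot f xb w p.1 p.2 := by
      filter_upwards [hpa.prod_mk hpb'] with p hp
      exact (hpab hp.1 hp.2).le
    exact haa'.trans_le (Filter.le_liminf_of_le (h := hev'))
  -- convexity
  have hconvx : EConvexOn (fun z : Eucl n => parabolicSubderiv f xb w z) := by
    have hkey : ∀ t : ℝ, 0 < t → ∀ a b : ℝ, 0 < a → 0 < b → a + b = 1 →
        ∀ z₁ z₂ : Eucl n, psdQuot f xb w t (a • z₁ + b • z₂)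
          ≤ ((a : ℝ) : EReal) * psdQuot f xb w t z₁
            + ((b : ℝ) : EReal) * psdQuot f xb w t z₂ := by
      intro t ht a b ha hb hab z₁ z₂
      have hr : (0 : ℝ) < 2 / t ^ 2 := by positivity
      set x₁ : Eucl n := xb + t • w + (t ^ 2 / 2) • z₁ with hx₁
      set x₂ : Eucl n := xb + t • w + (t ^ 2 / 2) • z₂ with hx₂
      set c : ℝ := -fr - t * s with hc
      have hx : xb + t • w + (t ^ 2 / 2) • (a • z₁ + b • z₂) = a • x₁ + b • x₂ := by
        have hb1 : b = 1 - a := by linarith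
        rw [hx₁, hx₂, hb1]
        match_scalars <;> ring
      have hconv := hfconv x₁ x₂ a b ha.le hb.le hab
      have h1 : f (a • x₁ + b • x₂) + (c : EReal)
          ≤ ((a : ℝ) : EReal) * (f x₁ + (c : EReal))
            + ((b : ℝ) : EReal) * (f x₂ + (c : EReal)) := by
        rw [myMulAdd ha (hfbot x₁) (EReal.coe_ne_bot c),
          myMulAdd hb (hfbot x₂) (EReal.coe_ne_bot c)]
        have hcsplit : (c : EReal) = ((a * c : ℝ) : EReal) + ((b * c : ℝ) : EReal) := by
          rw [← EReal.coe_add]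
          norm_cast
          linear_combination (-c) * hab
        calc f (a • x₁ + b • x₂) + (c : EReal)
            ≤ (((a : ℝ) : EReal) * f x₁ + ((b : ℝ) : EReal) * f x₂) + (c : EReal) :=
              add_le_add_left hconv _
          _ = (((a : ℝ) : EReal) * f x₁ + ((a * c : ℝ) : EReal))
              + (((b : ℝ) : EReal) * f x₂ + ((b * c : ℝ) : EReal)) := by
              rw [hcsplit, add_add_add_comm]
      have hY₁ : ((a : ℝ) : EReal) * (f x₁ + (c : EReal)) ≠ ⊥ :=
        myMulNeBot ha (myAddNeBot (hfbot x₁) c)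
      have hY₂ : ((b : ℝ) : EReal) * (f x₂ + (c : EReal)) ≠ ⊥ :=
        myMulNeBot hb (myAddNeBot (hfbot x₂) c)
      rw [hquot, hquot, hquot, hx]
      calc ((2 / t ^ 2 : ℝ) : EReal) * (f (a • x₁ + b • x₂) + (c : EReal))
          ≤ ((2 / t ^ 2 : ℝ) : EReal) *
              (((a : ℝ) : EReal) * (f x₁ + (c : EReal))
                + ((b : ℝ) : EReal) * (f x₂ + (c : EReal))) :=
            mul_le_mul_of_nonneg_left h1 (by exact_mod_cast hr.le)
        _ = ((2 / t ^ 2 : ℝ) : EReal) * (((a : ℝ) : EReal) * (f x₁ + (c : EReal)))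
            + ((2 / t ^ 2 : ℝ) : EReal) * (((b : ℝ) : EReal) * (f x₂ + (c : EReal))) :=
            myMulAdd hr hY₁ hY₂
        _ = ((a : ℝ) : EReal) * (((2 / t ^ 2 : ℝ) : EReal) * (f x₁ + (c : EReal)))
            + ((b : ℝ) : EReal) * (((2 / t ^ 2 : ℝ) : EReal) * (f x₂ + (c : EReal))) := by
            rw [← mul_assoc, ← mul_assoc,
              mul_comm (((2 / t ^ 2 : ℝ) : EReal)) (((a : ℝ) : EReal)),
              mul_comm (((2 / t ^ 2 : ℝ) : EReal)) (((b : ℝ) : EReal)),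
              mul_assoc, mul_assoc]
    intro z₁ z₂ a b ha hb hab
    rcases ha.eq_or_lt with rfl | ha'
    · have hb1 : b = 1 := by linarith
      subst hb1
      simp
    rcases hb.eq_or_lt with rfl | hb'
    · have ha1 : a = 1 := by linarith
      subst ha1
      simp
    by_cases h1 : parabolicSubderiv f xb w z₁ = ⊤
    · simp only []
      rw [h1, EReal.coe_mul_top_of_pos ha',
        EReal.top_add_of_ne_bot (myMulNeBot hb' (hlowne z₂))]
      exact le_top
    by_cases h2 : parabolicSubderiv f xb w z₂ = ⊤
    · simp only []
      rw [h2, EReal.coe_mul_top_of_pos hb',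
        EReal.add_top_of_ne_bot (myMulNeBot ha' (hlowne z₁))]
      exact le_top
    set r₁ : ℝ := (parabolicSubderiv f xb w z₁).toReal with hr₁
    set r₂ : ℝ := (parabolicSubderiv f xb w z₂).toReal with hr₂
    have hg1 : parabolicSubderiv f xb w z₁ = (r₁ : EReal) :=
      (EReal.coe_toReal h1 (hlowne z₁)).symm
    have hg2 : parabolicSubderiv f xb w z₂ = (r₂ : EReal) :=
      (EReal.coe_toReal h2 (hlowne z₂)).symm
    show parabolicSubderiv f xb w (a • z₁ + b • z₂)
      ≤ ((a : ℝ) : EReal) * parabolicSubderiv f xb w z₁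
        + ((b : ℝ) : EReal) * parabolicSubderiv f xb w z₂
    rw [hg1, hg2, ← EReal.coe_mul, ← EReal.coe_mul, ← EReal.coe_add]
    apply myLeCoe
    intro ε hε
    set t : ℕ → ℝ := fun k => 1 / ((k : ℝ) + 1) with htdef
    have ht0 : ∀ k, 0 < t k := fun k => by positivity
    have htlim : Filter.Tendsto t atTop (𝓝 0) := tendsto_one_div_add_atTop_nhds_zero_nat
    obtain ⟨zk₁, hzk₁, hA⟩ := hpe.2 z₁ t ht0 htlim
    obtain ⟨zk₂, hzk₂, hB⟩ := hpe.2 z₂ t ht0 htlim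
    rw [hg1] at hA
    rw [hg2] at hB
    have hAe : ∀ᶠ k in atTop, psdQuot f xb w (t k) (zk₁ k) < ((r₁ + ε : ℝ) : EReal) :=
      hA.eventually_lt_const (by exact_mod_cast (by linarith : r₁ < r₁ + ε))
    have hBe : ∀ᶠ k in atTop, psdQuot f xb w (t k) (zk₂ k) < ((r₂ + ε : ℝ) : EReal) :=
      hB.eventually_lt_const (by exact_mod_cast (by linarith : r₂ < r₂ + ε))
    have hev : ∀ᶠ k in atTop, psdQuot f xb w (t k) (a • zk₁ k + b • zk₂ k)
        ≤ ((a * r₁ + b * r₂ + ε : ℝ) : EReal) := by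
      filter_upwards [hAe, hBe] with k hk₁ hk₂
      calc psdQuot f xb w (t k) (a • zk₁ k + b • zk₂ k)
          ≤ ((a : ℝ) : EReal) * psdQuot f xb w (t k) (zk₁ k)
            + ((b : ℝ) : EReal) * psdQuot f xb w (t k) (zk₂ k) :=
            hkey (t k) (ht0 k) a b ha' hb' hab _ _
        _ ≤ ((a : ℝ) : EReal) * ((r₁ + ε : ℝ) : EReal)
            + ((b : ℝ) : EReal) * ((r₂ + ε : ℝ) : EReal) :=
            add_le_add
              (mul_le_mul_of_nonneg_left hk₁.le (by exact_mod_cast ha))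
              (mul_le_mul_of_nonneg_left hk₂.le (by exact_mod_cast hb))
        _ = ((a * r₁ + b * r₂ + ε : ℝ) : EReal) := by
            rw [← EReal.coe_mul, ← EReal.coe_mul, ← EReal.coe_add]
            norm_cast
            linear_combination ε * hab
    have hpt : Filter.Tendsto (fun k => (t k, a • zk₁ k + b • zk₂ k)) atTop
        ((𝓝[>] (0 : ℝ)) ×ˢ 𝓝 (a • z₁ + b • z₂)) := by
      refine Filter.Tendsto.prodMk ?_ ?_
      · exact tendsto_nhdsWithin_of_tendsto_nhds_of_eventually_within _ htlim
          (Filter.Eventually.of_forall ht0)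
      · exact (hzk₁.const_smul a).add (hzk₂.const_smul b)
    have hfreq : ∃ᶠ p : ℝ × Eucl n in (𝓝[>] (0 : ℝ)) ×ˢ 𝓝 (a • z₁ + b • z₂),
        psdQuot f xb w p.1 p.2 ≤ ((a * r₁ + b * r₂ + ε : ℝ) : EReal) :=
      hpt.frequently hev.frequently
    exact Filter.liminf_le_of_frequently_le' hfreq
  exact ⟨hlowne, ⟨z₀, hz₀.ne⟩, hlsc, hconvx⟩
end

section
/- Let f: ℝⁿ → ℝ∪{+∞} be a proper lower semicontinuous convex function with f(x̄) finite, let v̄ ∈ ∂f(x̄), let w ∈ K_f(x̄,v̄) := {w | df(x̄)(w) = ⟨v̄,w⟩}, and assume f is parabolically epi-differentiable at x̄ for w. Then for every v ∈ ℝⁿ not belonging to 𝒜(x̄,w) := {v ∈ ∂f(x̄) | df(x̄)(w) = ⟨v,w⟩}, the Fenchel conjugate of z ↦ d²f(x̄)(w|z) satisfies (d²f(x̄)(w|·))*(v) = +∞. -/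
open Filter Topology MeasureTheory Set RealInnerProductSpace

section AuxStatement9

open Filter

variable {n : ℕ}

/-- liminf over a filter is at most the liminf along any sequence tending to that filter. -/
lemma aux9_liminf_le_seq {α : Type*} {F : Filter α} (u : α → EReal) {g : ℕ → α}
    (hg : Tendsto g atTop F) : F.liminf u ≤ atTop.liminf (u ∘ g) := by
  rw [Filter.liminf_comp]
  exact Filter.liminf_le_liminf_of_le hg

lemma aux9_tendsto_prod {t : ℕ → ℝ} {z : ℕ → Eucl n} {z₀ : Eucl n}
    (ht0 : Tendsto t atTop (𝓝 0)) (htp : ∀ᶠ k in atTop, 0 < t k)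
    (hz : Tendsto z atTop (𝓝 z₀)) :
    Tendsto (fun k => (t k, z k)) atTop ((𝓝[>] (0:ℝ)) ×ˢ 𝓝 z₀) :=
  (tendsto_nhdsWithin_iff.mpr ⟨ht0, htp⟩).prodMk hz

/-- Pointwise lower bound of the parabolic difference quotient by a subgradient. -/
lemma aux9_psdQuot_lower {f : Eucl n → EReal} {xb vb w : Eucl n}
    (hfbot : ∀ x, f x ≠ ⊥) (hfin : f xb ≠ ⊤) (hvb : vb ∈ convexSubdiff f xb)
    (hcrit : subderiv f xb w = ((⟪vb, w⟫ : ℝ) : EReal))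
    {t : ℝ} (ht : 0 < t) (z' : Eucl n) :
    ((⟪vb, z'⟫ : ℝ) : EReal) ≤ psdQuot f xb w t z' := by
  obtain ⟨fxb', hfxb⟩ : ∃ r : ℝ, f xb = (r : EReal) :=
    ⟨(f xb).toReal, (EReal.coe_toReal hfin (hfbot xb)).symm⟩
  unfold psdQuot
  rw [hcrit, hfxb]
  set P : Eucl n := xb + t • w + (t ^ 2 / 2) • z' with hP
  have hsub' := hvb P
  have hip : ⟪vb, P - xb⟫ = t * ⟪vb, w⟫ + t ^ 2 / 2 * ⟪vb, z'⟫ := by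
    have hPx : P - xb = t • w + (t ^ 2 / 2) • z' := by rw [hP]; abel
    rw [hPx, inner_add_right, real_inner_smul_right, real_inner_smul_right]
  have hmul : (t : EReal) * ((⟪vb, w⟫ : ℝ) : EReal) = ((t * ⟪vb, w⟫ : ℝ) : EReal) :=
    (EReal.coe_mul _ _).symm
  rw [hmul]
  rcases eq_or_ne (f P) ⊤ with hfP | hfP
  · rw [hfP, EReal.top_sub_coe, EReal.top_sub_coe,
      EReal.coe_mul_top_of_pos (by positivity)]
    exact le_top
  · obtain ⟨fP', hfP'⟩ : ∃ r : ℝ, f P = (r : EReal) :=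
      ⟨(f P).toReal, (EReal.coe_toReal hfP (hfbot P)).symm⟩
    rw [hfxb, hfP', hip, ← EReal.coe_add, EReal.coe_le_coe_iff] at hsub'
    rw [hfP', ← EReal.coe_sub, ← EReal.coe_sub, ← EReal.coe_mul, EReal.coe_le_coe_iff]
    have e1 : 2 / t ^ 2 * (t ^ 2 / 2 * ⟪vb, z'⟫) = ⟪vb, z'⟫ := by
      field_simp
    calc ⟪vb, z'⟫ = 2 / t ^ 2 * (t ^ 2 / 2 * ⟪vb, z'⟫) := e1.symm
      _ ≤ 2 / t ^ 2 * (fP' - fxb' - t * ⟪vb, w⟫) := by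
          apply mul_le_mul_of_nonneg_left (by linarith) (by positivity)

/-- Lower bound on the parabolic subderivative by a subgradient. -/
lemma aux9_parab_lower {f : Eucl n → EReal} {xb vb w : Eucl n}
    (hfbot : ∀ x, f x ≠ ⊥) (hfin : f xb ≠ ⊤) (hvb : vb ∈ convexSubdiff f xb)
    (hcrit : subderiv f xb w = ((⟪vb, w⟫ : ℝ) : EReal)) (z : Eucl n) :
    ((⟪vb, z⟫ : ℝ) : EReal) ≤ parabolicSubderiv f xb w z := by
  have hcont : Tendsto (fun p : ℝ × Eucl n => ((⟪vb, p.2⟫ : ℝ) : EReal))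
      ((𝓝[>] (0:ℝ)) ×ˢ 𝓝 z) (𝓝 ((⟪vb, z⟫ : ℝ) : EReal)) := by
    apply (continuous_coe_real_ereal.tendsto _).comp
    exact ((continuous_const.inner continuous_id).tendsto z).comp tendsto_snd
  have hev : ∀ᶠ p : ℝ × Eucl n in (𝓝[>] (0:ℝ)) ×ˢ 𝓝 z,
      ((⟪vb, p.2⟫ : ℝ) : EReal) ≤ psdQuot f xb w p.1 p.2 := by
    filter_upwards [(eventually_mem_nhdsWithin (a := (0:ℝ)) (s := Set.Ioi 0)).prod_inl
      (𝓝 z)] with p hp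
    exact aux9_psdQuot_lower hfbot hfin hvb hcrit hp p.2
  calc ((⟪vb, z⟫ : ℝ) : EReal)
      = Filter.liminf (fun p : ℝ × Eucl n => ((⟪vb, p.2⟫ : ℝ) : EReal))
        ((𝓝[>] (0:ℝ)) ×ˢ 𝓝 z) := hcont.liminf_eq.symm
    _ ≤ parabolicSubderiv f xb w z := Filter.liminf_le_liminf hev

/-- Lower bound on the subderivative by a subgradient. -/
lemma aux9_subderiv_lower {f : Eucl n → EReal} {xb v w : Eucl n}
    (hfbot : ∀ x, f x ≠ ⊥) (hfin : f xb ≠ ⊤) (hv : v ∈ convexSubdiff f xb) :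
    ((⟪v, w⟫ : ℝ) : EReal) ≤ subderiv f xb w := by
  obtain ⟨fxb', hfxb⟩ : ∃ r : ℝ, f xb = (r : EReal) :=
    ⟨(f xb).toReal, (EReal.coe_toReal hfin (hfbot xb)).symm⟩
  have hpt : ∀ (t : ℝ), 0 < t → ∀ w' : Eucl n,
      ((⟪v, w'⟫ : ℝ) : EReal) ≤ sdQuot f xb t w' := by
    intro t ht w'
    unfold sdQuot
    rw [hfxb]
    set P : Eucl n := xb + t • w' with hP
    have hsub' := hv P
    have hip : ⟪v, P - xb⟫ = t * ⟪v, w'⟫ := by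
      have hPx : P - xb = t • w' := by rw [hP]; abel
      rw [hPx, real_inner_smul_right]
    rcases eq_or_ne (f P) ⊤ with hfP | hfP
    · rw [hfP, EReal.top_sub_coe, EReal.coe_mul_top_of_pos (by positivity)]
      exact le_top
    · obtain ⟨fP', hfP'⟩ : ∃ r : ℝ, f P = (r : EReal) :=
        ⟨(f P).toReal, (EReal.coe_toReal hfP (hfbot P)).symm⟩
      rw [hfxb, hfP', hip, ← EReal.coe_add, EReal.coe_le_coe_iff] at hsub'
      rw [hfP', ← EReal.coe_sub, ← EReal.coe_mul, EReal.coe_le_coe_iff]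
      have e1 : t⁻¹ * (t * ⟪v, w'⟫) = ⟪v, w'⟫ := by field_simp
      calc ⟪v, w'⟫ = t⁻¹ * (t * ⟪v, w'⟫) := e1.symm
        _ ≤ t⁻¹ * (fP' - fxb') := by
            apply mul_le_mul_of_nonneg_left (by linarith) (by positivity)
  have hcont : Tendsto (fun p : ℝ × Eucl n => ((⟪v, p.2⟫ : ℝ) : EReal))
      ((𝓝[>] (0:ℝ)) ×ˢ 𝓝 w) (𝓝 ((⟪v, w⟫ : ℝ) : EReal)) := by
    apply (continuous_coe_real_ereal.tendsto _).comp
    exact ((continuous_const.inner continuous_id).tendsto w).comp tendsto_snd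
  have hev : ∀ᶠ p : ℝ × Eucl n in (𝓝[>] (0:ℝ)) ×ˢ 𝓝 w,
      ((⟪v, p.2⟫ : ℝ) : EReal) ≤ sdQuot f xb p.1 p.2 := by
    filter_upwards [(eventually_mem_nhdsWithin (a := (0:ℝ)) (s := Set.Ioi 0)).prod_inl
      (𝓝 w)] with p hp
    exact hpt p.1 hp p.2
  calc ((⟪v, w⟫ : ℝ) : EReal)
      = Filter.liminf (fun p : ℝ × Eucl n => ((⟪v, p.2⟫ : ℝ) : EReal))
        ((𝓝[>] (0:ℝ)) ×ˢ 𝓝 w) := hcont.liminf_eq.symm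
    _ ≤ subderiv f xb w := Filter.liminf_le_liminf hev

/-- Convexity estimate: shifting the parabolic argument in the direction `-w`. -/
lemma aux9_quot_shift_w {f : Eucl n → EReal} {xb w : Eucl n}
    (hfconv : EConvexOn f) (hfbot : ∀ x, f x ≠ ⊥) (hfin : f xb ≠ ⊤)
    {c : ℝ} (hcrit : subderiv f xb w = (c : EReal))
    {s t : ℝ} (hs : 0 < s) (ht : 0 < t) (hts : t * s < 1) (z' : Eucl n) :
    psdQuot f xb w t (z' - s • w) ≤
      psdQuot f xb w (t / (1 - t * s / 2)) z' + ((-(s * c) : ℝ) : EReal) := by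
  obtain ⟨fxb', hfxb⟩ : ∃ r : ℝ, f xb = (r : EReal) :=
    ⟨(f xb).toReal, (EReal.coe_toReal hfin (hfbot xb)).symm⟩
  have hu : (0:ℝ) < 1 - t * s / 2 := by nlinarith
  have h2 : (2:ℝ) - t * s ≠ 0 := by intro h; rw [sub_eq_zero] at h; nlinarith
  set τ : ℝ := t / (1 - t * s / 2) with hτ
  have hτpos : 0 < τ := by positivity
  set μ : ℝ := (1 - t * s / 2) ^ 2 with hμ
  have hμpos : 0 < μ := by positivity
  have hμle : μ ≤ 1 := by nlinarith [mul_pos ht hs]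
  set Q : Eucl n := xb + τ • w + (τ ^ 2 / 2) • z' with hQ
  have hcomb : xb + t • w + (t ^ 2 / 2) • (z' - s • w) = (1 - μ) • xb + μ • Q := by
    rw [hQ, hμ, hτ]
    match_scalars
    · ring
    · field_simp [h2]
      ring
    · field_simp [h2]
  have hconv := hfconv xb Q (1 - μ) μ (by linarith) hμpos.le (by ring)
  rw [← hcomb] at hconv
  unfold psdQuot
  rw [hcrit, hfxb]
  have hm1 : (t : EReal) * ((c : ℝ) : EReal) = ((t * c : ℝ) : EReal) :=
    (EReal.coe_mul _ _).symm
  have hm2 : (τ : EReal) * ((c : ℝ) : EReal) = ((τ * c : ℝ) : EReal) :=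
    (EReal.coe_mul _ _).symm
  rw [hm1, hm2, ← hQ]
  rcases eq_or_ne (f Q) ⊤ with hfQ | hfQ
  · rw [hfQ, EReal.top_sub_coe, EReal.top_sub_coe,
      EReal.coe_mul_top_of_pos (by positivity), EReal.top_add_coe]
    exact le_top
  · obtain ⟨fQ', hfQ'⟩ : ∃ r : ℝ, f Q = (r : EReal) :=
      ⟨(f Q).toReal, (EReal.coe_toReal hfQ (hfbot Q)).symm⟩
    rw [hfxb, hfQ', ← EReal.coe_mul, ← EReal.coe_mul, ← EReal.coe_add] at hconv
    set P : Eucl n := xb + t • w + (t ^ 2 / 2) • (z' - s • w) with hP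
    have hPtop : f P ≠ ⊤ := fun h => by
      rw [h] at hconv
      exact EReal.coe_ne_top _ (top_le_iff.1 hconv)
    obtain ⟨fP', hfP'⟩ : ∃ r : ℝ, f P = (r : EReal) :=
      ⟨(f P).toReal, (EReal.coe_toReal hPtop (hfbot P)).symm⟩
    rw [hfP', EReal.coe_le_coe_iff] at hconv
    rw [hfP', hfQ', ← EReal.coe_sub, ← EReal.coe_sub, ← EReal.coe_mul,
      ← EReal.coe_sub, ← EReal.coe_sub, ← EReal.coe_mul, ← EReal.coe_add,
      EReal.coe_le_coe_iff]
    have key : 2 / τ ^ 2 * (fQ' - fxb' - τ * c) + -(s * c)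
        = 2 / t ^ 2 * ((1 - μ) * fxb' + μ * fQ' - fxb' - t * c) := by
      rw [hτ, hμ]
      field_simp [h2]
      ring
    rw [key]
    apply mul_le_mul_of_nonneg_left (by linarith) (by positivity)

/-- Convexity estimate: shifting the parabolic argument in the direction `x - xb`. -/
lemma aux9_quot_shift_x {f : Eucl n → EReal} {xb w : Eucl n}
    (hfconv : EConvexOn f) (hfbot : ∀ x, f x ≠ ⊥) (hfin : f xb ≠ ⊤)
    {c : ℝ} (hcrit : subderiv f xb w = (c : EReal))
    {x : Eucl n} {fx' : ℝ} (hfx : f x = (fx' : EReal))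
    {s t : ℝ} (hs : 0 < s) (ht : 0 < t) (hts : t ^ 2 * s < 1) (z' : Eucl n) :
    psdQuot f xb w t (z' + s • (x - xb)) ≤
      (((1 - t ^ 2 * s / 2)⁻¹ : ℝ) : EReal) *
          psdQuot f xb w (t / (1 - t ^ 2 * s / 2)) ((1 - t ^ 2 * s / 2) • z')
        + ((s * (fx' - (f xb).toReal) : ℝ) : EReal) := by
  obtain ⟨fxb', hfxb⟩ : ∃ r : ℝ, f xb = (r : EReal) :=
    ⟨(f xb).toReal, (EReal.coe_toReal hfin (hfbot xb)).symm⟩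
  simp only [hfxb, EReal.toReal_coe]
  set u : ℝ := 1 - t ^ 2 * s / 2 with hu0
  have hupos : 0 < u := by rw [hu0]; nlinarith
  have h1u : 1 - u = t ^ 2 * s / 2 := by rw [hu0]; ring
  have h2 : (2:ℝ) - t ^ 2 * s ≠ 0 := by intro h; rw [sub_eq_zero] at h; nlinarith
  set τ : ℝ := t / u with hτ
  have hτpos : 0 < τ := by positivity
  set Q : Eucl n := xb + τ • w + (τ ^ 2 / 2) • (u • z') with hQ
  have hcomb : xb + t • w + (t ^ 2 / 2) • (z' + s • (x - xb)) = u • Q + (1 - u) • x := by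
    rw [hQ, hτ, hu0]
    match_scalars <;> field_simp [h2] <;> ring
  have hconv := hfconv Q x u (1 - u) hupos.le (by rw [h1u]; positivity) (by ring)
  rw [← hcomb] at hconv
  unfold psdQuot
  rw [hcrit, hfxb]
  have hm1 : (t : EReal) * ((c : ℝ) : EReal) = ((t * c : ℝ) : EReal) :=
    (EReal.coe_mul _ _).symm
  have hm2 : (τ : EReal) * ((c : ℝ) : EReal) = ((τ * c : ℝ) : EReal) :=
    (EReal.coe_mul _ _).symm
  rw [hm1, hm2, ← hQ]
  rcases eq_or_ne (f Q) ⊤ with hfQ | hfQ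
  · rw [hfQ, EReal.top_sub_coe, EReal.top_sub_coe,
      EReal.coe_mul_top_of_pos (by positivity : (0:ℝ) < 2 / τ ^ 2),
      EReal.coe_mul_top_of_pos (by positivity : (0:ℝ) < u⁻¹), EReal.top_add_coe]
    exact le_top
  · obtain ⟨fQ', hfQ'⟩ : ∃ r : ℝ, f Q = (r : EReal) :=
      ⟨(f Q).toReal, (EReal.coe_toReal hfQ (hfbot Q)).symm⟩
    rw [hfQ', hfx, ← EReal.coe_mul, ← EReal.coe_mul, ← EReal.coe_add] at hconv
    set P : Eucl n := xb + t • w + (t ^ 2 / 2) • (z' + s • (x - xb)) with hP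
    have hPtop : f P ≠ ⊤ := fun h => by
      rw [h] at hconv
      exact EReal.coe_ne_top _ (top_le_iff.1 hconv)
    obtain ⟨fP', hfP'⟩ : ∃ r : ℝ, f P = (r : EReal) :=
      ⟨(f P).toReal, (EReal.coe_toReal hPtop (hfbot P)).symm⟩
    rw [hfP', EReal.coe_le_coe_iff] at hconv
    rw [hfP', hfQ', ← EReal.coe_sub, ← EReal.coe_sub, ← EReal.coe_mul,
      ← EReal.coe_sub, ← EReal.coe_sub, ← EReal.coe_mul, ← EReal.coe_mul,
      ← EReal.coe_add, EReal.coe_le_coe_iff]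
    have key : u⁻¹ * (2 / τ ^ 2 * (fQ' - fxb' - τ * c)) + s * (fx' - fxb')
        = 2 / t ^ 2 * (u * fQ' + (1 - u) * fx' - fxb' - t * c) := by
      rw [hτ, hu0]
      field_simp [h2]
      ring
    rw [key]
    apply mul_le_mul_of_nonneg_left (by linarith) (by positivity)

set_option maxHeartbeats 1000000 in
/-- Transported upper bound for the parabolic subderivative, direction `-w`. -/
lemma aux9_parab_shift_w {f : Eucl n → EReal} {xb w : Eucl n}
    (hfconv : EConvexOn f) (hfbot : ∀ x, f x ≠ ⊥) (hfin : f xb ≠ ⊤)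
    {c : ℝ} (hcrit : subderiv f xb w = (c : EReal)) (hpe : ParaEpiDiff f xb w)
    {z₀ : Eucl n} {d₀ : ℝ} (hd : parabolicSubderiv f xb w z₀ = (d₀ : EReal))
    {s : ℝ} (hs : 0 < s) :
    parabolicSubderiv f xb w (z₀ - s • w) ≤ ((d₀ - s * c : ℝ) : EReal) := by
  classical
  set K : ℕ := ⌈s⌉₊ + 1 with hK
  have hKs : s < (K : ℝ) := by
    have := Nat.le_ceil s
    push_cast [hK]
    linarith
  have hK1 : (1:ℝ) ≤ (K : ℝ) := by
    have : (1:ℕ) ≤ K := by omega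
    exact_mod_cast this
  set t : ℕ → ℝ := fun k => 1 / ((k : ℝ) + K) with htdef
  have hden : ∀ k : ℕ, 0 < (k : ℝ) + K := fun k => by
    have := Nat.cast_nonneg (α := ℝ) k
    linarith
  have htpos : ∀ k, 0 < t k := fun k => by
    rw [htdef]
    positivity
  have hts : ∀ k, t k * s < 1 := by
    intro k
    rw [htdef]
    simp only
    rw [div_mul_eq_mul_div, one_mul, div_lt_one (hden k)]
    have := Nat.cast_nonneg (α := ℝ) k
    linarith
  have ht0 : Tendsto t atTop (𝓝 0) := by
    rw [htdef]
    simp only [one_div]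
    exact (tendsto_atTop_add_const_right atTop (K : ℝ)
      tendsto_natCast_atTop_atTop).inv_tendsto_atTop
  set τ : ℕ → ℝ := fun k => t k / (1 - t k * s / 2) with hτdef
  have hτpos : ∀ k, 0 < τ k := fun k => by
    have h1 := htpos k
    have h2 := hts k
    rw [hτdef]
    simp only
    apply div_pos h1
    nlinarith
  have hτ0 : Tendsto τ atTop (𝓝 0) := by
    rw [hτdef]
    have h1 : Tendsto (fun k => 1 - t k * s / 2) atTop (𝓝 1) := by
      have h2 := (ht0.mul_const s).div_const 2
      rw [zero_mul, zero_div] at h2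
      have h3 : Tendsto (fun k => 1 - t k * s / 2) atTop (𝓝 (1 - 0)) :=
        tendsto_const_nhds.sub h2
      rwa [sub_zero] at h3
    have h5 := ht0.div h1 one_ne_zero
    rw [zero_div] at h5
    exact h5
  obtain ⟨zk, hzk, hq⟩ := hpe.2 z₀ τ hτpos hτ0
  rw [hd] at hq
  set r : ℕ → ℝ := fun k => (psdQuot f xb w (τ k) (zk k)).toReal with hrdef
  have hr : Tendsto r atTop (𝓝 d₀) := by
    have := (EReal.tendsto_toReal (EReal.coe_ne_top d₀) (EReal.coe_ne_bot d₀)).comp hq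
    simpa [hrdef, Function.comp_def] using this
  have hev : ∀ᶠ k in atTop, psdQuot f xb w (τ k) (zk k) = ((r k : ℝ) : EReal) := by
    filter_upwards [hq.eventually_lt_const (EReal.coe_lt_top d₀),
      hq.eventually_const_lt (EReal.bot_lt_coe d₀)] with k h1 h2
    exact (EReal.coe_toReal h1.ne h2.ne').symm
  have hbound : ∀ᶠ k in atTop,
      psdQuot f xb w (t k) (zk k - s • w) ≤ ((r k - s * c : ℝ) : EReal) := by
    filter_upwards [hev] with k hk
    have h1 := aux9_quot_shift_w hfconv hfbot hfin hcrit hs (htpos k) (hts k) (zk k)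
    have hτk : t k / (1 - t k * s / 2) = τ k := by rw [hτdef]
    rw [hτk, hk, ← EReal.coe_add] at h1
    have : r k + -(s * c) = r k - s * c := by ring
    rwa [this] at h1
  have hg : Tendsto (fun k => (t k, zk k - s • w)) atTop
      ((𝓝[>] (0:ℝ)) ×ˢ 𝓝 (z₀ - s • w)) :=
    aux9_tendsto_prod ht0 (Eventually.of_forall htpos) (hzk.sub_const _)
  have hlim : Tendsto (fun k => ((r k - s * c : ℝ) : EReal)) atTop
      (𝓝 ((d₀ - s * c : ℝ) : EReal)) :=
    (continuous_coe_real_ereal.tendsto _).comp (hr.sub_const _)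
  have hstep := aux9_liminf_le_seq (fun p : ℝ × Eucl n => psdQuot f xb w p.1 p.2) hg
  have hcomp : ((fun p : ℝ × Eucl n => psdQuot f xb w p.1 p.2) ∘
      (fun k => (t k, zk k - s • w))) = fun k => psdQuot f xb w (t k) (zk k - s • w) := rfl
  rw [hcomp] at hstep
  have hfinal : atTop.liminf (fun k => psdQuot f xb w (t k) (zk k - s • w))
      ≤ ((d₀ - s * c : ℝ) : EReal) :=
    le_of_le_of_eq (Filter.liminf_le_liminf hbound) hlim.liminf_eq
  exact le_trans hstep hfinal

/-- Transported upper bound for the parabolic subderivative, direction `x - xb`. -/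
lemma aux9_parab_shift_x {f : Eucl n → EReal} {xb w : Eucl n}
    (hfconv : EConvexOn f) (hfbot : ∀ x, f x ≠ ⊥) (hfin : f xb ≠ ⊤)
    {c : ℝ} (hcrit : subderiv f xb w = (c : EReal)) (hpe : ParaEpiDiff f xb w)
    {z₀ : Eucl n} {d₀ : ℝ} (hd : parabolicSubderiv f xb w z₀ = (d₀ : EReal))
    {x : Eucl n} {fx' : ℝ} (hfx : f x = (fx' : EReal))
    {s : ℝ} (hs : 0 < s) :
    parabolicSubderiv f xb w (z₀ + s • (x - xb)) ≤
      ((d₀ + s * (fx' - (f xb).toReal) : ℝ) : EReal) := by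
  classical
  set K : ℕ := ⌈s⌉₊ + 1 with hK
  have hKs : s < (K : ℝ) := by
    have := Nat.le_ceil s
    push_cast [hK]
    linarith
  have hK1 : (1:ℝ) ≤ (K : ℝ) := by
    have : (1:ℕ) ≤ K := by omega
    exact_mod_cast this
  set t : ℕ → ℝ := fun k => 1 / ((k : ℝ) + K) with htdef
  have hden : ∀ k : ℕ, 0 < (k : ℝ) + K := fun k => by
    have := Nat.cast_nonneg (α := ℝ) k
    linarith
  have htpos : ∀ k, 0 < t k := fun k => by
    rw [htdef]
    positivity
  have htle : ∀ k, t k ≤ 1 := by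
    intro k
    rw [htdef]
    simp only
    rw [div_le_one (hden k)]
    have := Nat.cast_nonneg (α := ℝ) k
    linarith
  have hts : ∀ k, t k * s < 1 := by
    intro k
    rw [htdef]
    simp only
    rw [div_mul_eq_mul_div, one_mul, div_lt_one (hden k)]
    have := Nat.cast_nonneg (α := ℝ) k
    linarith
  have hts2 : ∀ k, t k ^ 2 * s < 1 := by
    intro k
    have h1 := htpos k
    have h2 := htle k
    have h3 := hts k
    nlinarith
  have ht0 : Tendsto t atTop (𝓝 0) := by
    rw [htdef]
    simp only [one_div]
    exact (tendsto_atTop_add_const_right atTop (K : ℝ)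
      tendsto_natCast_atTop_atTop).inv_tendsto_atTop
  set u : ℕ → ℝ := fun k => 1 - t k ^ 2 * s / 2 with hu0
  have hupos : ∀ k, 0 < u k := fun k => by
    have h1 := htpos k
    have h2 := hts2 k
    rw [hu0]
    simp only
    nlinarith
  have hu1 : Tendsto u atTop (𝓝 1) := by
    have hsq := ht0.pow 2
    rw [show (0:ℝ) ^ 2 = 0 by norm_num] at hsq
    have h2 := (hsq.mul_const s).div_const 2
    rw [zero_mul, zero_div] at h2
    have h3 : Tendsto (fun k => 1 - t k ^ 2 * s / 2) atTop (𝓝 (1 - 0)) :=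
      tendsto_const_nhds.sub h2
    rw [sub_zero] at h3
    exact h3
  have huinv : Tendsto (fun k => (u k)⁻¹) atTop (𝓝 1) := by
    have := hu1.inv₀ one_ne_zero
    rwa [inv_one] at this
  set τ : ℕ → ℝ := fun k => t k / u k with hτdef
  have hτpos : ∀ k, 0 < τ k := fun k => by
    rw [hτdef]
    exact div_pos (htpos k) (hupos k)
  have hτ0 : Tendsto τ atTop (𝓝 0) := by
    rw [hτdef]
    have h5 := ht0.div hu1 one_ne_zero
    rw [zero_div] at h5
    exact h5
  obtain ⟨zk, hzk, hq⟩ := hpe.2 z₀ τ hτpos hτ0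
  rw [hd] at hq
  set r : ℕ → ℝ := fun k => (psdQuot f xb w (τ k) (zk k)).toReal with hrdef
  have hr : Tendsto r atTop (𝓝 d₀) := by
    have := (EReal.tendsto_toReal (EReal.coe_ne_top d₀) (EReal.coe_ne_bot d₀)).comp hq
    simpa [hrdef, Function.comp_def] using this
  have hev : ∀ᶠ k in atTop, psdQuot f xb w (τ k) (zk k) = ((r k : ℝ) : EReal) := by
    filter_upwards [hq.eventually_lt_const (EReal.coe_lt_top d₀),
      hq.eventually_const_lt (EReal.bot_lt_coe d₀)] with k h1 h2
    exact (EReal.coe_toReal h1.ne h2.ne').symm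
  have hbound : ∀ᶠ k in atTop,
      psdQuot f xb w (t k) ((u k)⁻¹ • zk k + s • (x - xb)) ≤
        (((u k)⁻¹ * r k + s * (fx' - (f xb).toReal) : ℝ) : EReal) := by
    filter_upwards [hev] with k hk
    have h1 := aux9_quot_shift_x hfconv hfbot hfin hcrit hfx hs (htpos k) (hts2 k)
      ((u k)⁻¹ • zk k)
    have e1 : (1 : ℝ) - t k ^ 2 * s / 2 = u k := by rw [hu0]
    rw [e1] at h1
    have e2 : t k / u k = τ k := by rw [hτdef]
    have e3 : u k • ((u k)⁻¹ • zk k) = zk k := by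
      rw [smul_smul, mul_inv_cancel₀ (hupos k).ne', one_smul]
    rw [e2, e3, hk, ← EReal.coe_mul, ← EReal.coe_add] at h1
    exact h1
  have hg : Tendsto (fun k => (t k, (u k)⁻¹ • zk k + s • (x - xb))) atTop
      ((𝓝[>] (0:ℝ)) ×ˢ 𝓝 (z₀ + s • (x - xb))) := by
    apply aux9_tendsto_prod ht0 (Eventually.of_forall htpos)
    have h4 := huinv.smul hzk
    rw [one_smul] at h4
    exact h4.add_const _
  have hlim : Tendsto (fun k => (((u k)⁻¹ * r k + s * (fx' - (f xb).toReal) : ℝ) : EReal))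
      atTop (𝓝 ((d₀ + s * (fx' - (f xb).toReal) : ℝ) : EReal)) := by
    have h4 : Tendsto (fun k => (u k)⁻¹ * r k + s * (fx' - (f xb).toReal)) atTop
        (𝓝 (1 * d₀ + s * (fx' - (f xb).toReal))) := (huinv.mul hr).add_const _
    rw [one_mul] at h4
    exact (continuous_coe_real_ereal.tendsto _).comp h4
  have hstep := aux9_liminf_le_seq (fun p : ℝ × Eucl n => psdQuot f xb w p.1 p.2) hg
  have hcomp : ((fun p : ℝ × Eucl n => psdQuot f xb w p.1 p.2) ∘
      (fun k => (t k, (u k)⁻¹ • zk k + s • (x - xb)))) =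
      fun k => psdQuot f xb w (t k) ((u k)⁻¹ • zk k + s • (x - xb)) := rfl
  rw [hcomp] at hstep
  have hfinal : atTop.liminf (fun k => psdQuot f xb w (t k) ((u k)⁻¹ • zk k + s • (x - xb)))
      ≤ ((d₀ + s * (fx' - (f xb).toReal) : ℝ) : EReal) :=
    le_of_le_of_eq (Filter.liminf_le_liminf hbound) hlim.liminf_eq
  exact le_trans hstep hfinal

end AuxStatement9

/-- outside the set `𝒜(xb,w) = {v ∈ ∂f(xb) | df(xb)(w) = ⟨v,w⟩}`,
the Fenchel conjugate of the parabolic subderivative `d²f(xb)(w|·)` is `+∞`. -/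
theorem statement9 {n : ℕ} (f : Eucl n → EReal)
    (hfbot : ∀ x, f x ≠ ⊥) (hflsc : LowerSemicontinuous f) (hfconv : EConvexOn f)
    (xb : Eucl n) (hfin : f xb ≠ ⊤)
    (vb : Eucl n) (hvb : vb ∈ convexSubdiff f xb)
    (w : Eucl n) (hcrit : subderiv f xb w = ((⟪vb, w⟫ : ℝ) : EReal))
    (hpe : ParaEpiDiff f xb w) :
    ∀ v : Eucl n,
      ¬(v ∈ convexSubdiff f xb ∧ subderiv f xb w = ((⟪v, w⟫ : ℝ) : EReal)) →
      fenchel (fun z : Eucl n => parabolicSubderiv f xb w z) v = ⊤ := by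
  intro v hv
  by_contra hne
  set D : Eucl n → EReal := fun z => parabolicSubderiv f xb w z with hD
  -- basic real values
  obtain ⟨fxb', hfxb⟩ : ∃ r : ℝ, f xb = (r : EReal) :=
    ⟨(f xb).toReal, (EReal.coe_toReal hfin (hfbot xb)).symm⟩
  set c : ℝ := ⟪vb, w⟫ with hc
  -- a point where the parabolic subderivative is finite
  obtain ⟨z₀, hz₀⟩ := hpe.1
  have hDlow : ∀ z, ((⟪vb, z⟫ : ℝ) : EReal) ≤ D z := fun z =>
    aux9_parab_lower hfbot hfin hvb hcrit z
  have hDbot : ∀ z, D z ≠ ⊥ := by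
    intro z h
    have h0 := hDlow z
    rw [h, le_bot_iff] at h0
    exact EReal.coe_ne_bot _ h0
  obtain ⟨d₀, hd₀⟩ : ∃ r : ℝ, D z₀ = (r : EReal) :=
    ⟨(D z₀).toReal, (EReal.coe_toReal hz₀.ne (hDbot z₀)).symm⟩
  -- the conjugate value is a real number M
  set S : EReal := fenchel (fun z : Eucl n => parabolicSubderiv f xb w z) v with hS
  have hterm : ∀ z : Eucl n, ((⟪v, z⟫ : ℝ) : EReal) - D z ≤ S := fun z =>
    le_iSup (fun z : Eucl n => ((⟪v, z⟫ : ℝ) : EReal) - parabolicSubderiv f xb w z) z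
  have hSbot : S ≠ ⊥ := by
    intro h
    have h0 := hterm z₀
    rw [hd₀, ← EReal.coe_sub, h, le_bot_iff] at h0
    exact EReal.coe_ne_bot _ h0
  obtain ⟨M, hM⟩ : ∃ r : ℝ, S = (r : EReal) := ⟨S.toReal, (EReal.coe_toReal hne hSbot).symm⟩
  -- the key bound : D z ≥ ⟨v, z⟩ - M for all z
  have hkey : ∀ z : Eucl n, ((⟪v, z⟫ - M : ℝ) : EReal) ≤ D z := by
    intro z
    rcases eq_or_ne (D z) ⊤ with hDz | hDz
    · rw [hDz]; exact le_top
    obtain ⟨dz, hdz⟩ : ∃ r : ℝ, D z = (r : EReal) :=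
      ⟨(D z).toReal, (EReal.coe_toReal hDz (hDbot z)).symm⟩
    have h0 := hterm z
    rw [hdz, ← EReal.coe_sub, hM, EReal.coe_le_coe_iff] at h0
    rw [hdz, EReal.coe_le_coe_iff]
    linarith
  -- Step 1 : v is a subgradient of f at xb
  have hsub : v ∈ convexSubdiff f xb := by
    intro x
    rcases eq_or_ne (f x) ⊤ with hx | hx
    · rw [hx]; exact le_top
    obtain ⟨fx', hfx⟩ : ∃ r : ℝ, f x = (r : EReal) :=
      ⟨(f x).toReal, (EReal.coe_toReal hx (hfbot x)).symm⟩
    have hkey2 : ∀ s : ℝ, 0 < s →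
        ⟪v, z₀⟫ + s * ⟪v, x - xb⟫ - M ≤ d₀ + s * (fx' - fxb') := by
      intro s hs
      have h1 := (hkey (z₀ + s • (x - xb))).trans
        (aux9_parab_shift_x hfconv hfbot hfin hcrit hpe hd₀ hfx hs)
      rw [EReal.coe_le_coe_iff] at h1
      have h2 : ⟪v, z₀ + s • (x - xb)⟫ = ⟪v, z₀⟫ + s * ⟪v, x - xb⟫ := by
        rw [inner_add_right, real_inner_smul_right]
      have h3 : (f xb).toReal = fxb' := by rw [hfxb, EReal.toReal_coe]
      rw [h2, h3] at h1
      linarith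
    have hfin2 : ⟪v, x - xb⟫ ≤ fx' - fxb' := by
      by_contra hcon
      push_neg at hcon
      set δ : ℝ := ⟪v, x - xb⟫ - (fx' - fxb') with hδ
      have hδpos : 0 < δ := by simp only [hδ]; linarith
      set C : ℝ := d₀ - ⟪v, z₀⟫ + M with hC
      have hs : 0 < (|C| + 1) / δ := by positivity
      have := hkey2 _ hs
      have hEq : (|C| + 1) / δ * δ = |C| + 1 := by field_simp
      nlinarith [le_abs_self C]
    rw [hfxb, hfx, ← EReal.coe_add, EReal.coe_le_coe_iff]
    linarith
  -- Step 2 : ⟨v, w⟩ ≤ c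
  have h1 : ⟪v, w⟫ ≤ c := by
    have := (aux9_subderiv_lower hfbot hfin hsub (w := w)).trans_eq hcrit
    exact EReal.coe_le_coe_iff.1 this
  -- Step 3 : c ≤ ⟨v, w⟩
  have h2 : c ≤ ⟪v, w⟫ := by
    by_contra hcon
    push_neg at hcon
    set δ : ℝ := c - ⟪v, w⟫ with hδ
    have hδpos : 0 < δ := by simp only [hδ]; linarith
    set C : ℝ := d₀ - ⟪v, z₀⟫ + M with hC
    have hs : 0 < (|C| + 1) / δ := by positivity
    have h3 := (hkey (z₀ - ((|C| + 1) / δ) • w)).trans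
      (aux9_parab_shift_w hfconv hfbot hfin hcrit hpe hd₀ hs)
    rw [EReal.coe_le_coe_iff] at h3
    have h4 : ⟪v, z₀ - ((|C| + 1) / δ) • w⟫ = ⟪v, z₀⟫ - ((|C| + 1) / δ) * ⟪v, w⟫ := by
      rw [inner_sub_right, real_inner_smul_right]
    rw [h4] at h3
    have hEq : (|C| + 1) / δ * δ = |C| + 1 := by field_simp
    nlinarith [le_abs_self C]
  exact hv ⟨hsub, by rw [hcrit]; congr 1; linarith⟩
end

section
/- Let f: ℝⁿ → ℝ∪{+∞} be a proper lower semicontinuous convex function with f(x̄) finite, let v̄ ∈ ∂f(x̄), let w ∈ K_f(x̄,v̄) := {w | df(x̄)(w) = ⟨v̄,w⟩}, and assume f is parabolically epi-differentiable at x̄ for w. If v ∈ 𝒜(x̄,w) := {v ∈ ∂f(x̄) | df(x̄)(w) = ⟨v,w⟩} and f is parabolically regular at x̄ for v, then (d²f(x̄)(w|·))*(v) = −d²f(x̄|v)(w), where * denotes the Fenchel conjugate. -/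
open Filter Topology MeasureTheory Set RealInnerProductSpace

private lemma liminf_le_of_tendsto_seq {α : Type*} {F : Filter α} {u : ℕ → α} {g : α → EReal}
    {L : EReal} (hu : Tendsto u atTop F) (hg : Tendsto (fun k => g (u k)) atTop (𝓝 L)) :
    F.liminf g ≤ L := by
  have h1 : F.liminf g ≤ Filter.liminf g (Filter.map u atTop) :=
    Filter.liminf_le_liminf_of_le hu
  have h2 : Filter.liminf g (Filter.map u atTop) = L :=
    Filter.Tendsto.liminf_eq (Filter.tendsto_map'_iff.mpr hg)
  exact h1.trans_eq h2

private lemma ssd_psd_identity {n : ℕ} (f : Eucl n → EReal)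
    (hfbot : ∀ x, f x ≠ ⊥) (xb : Eucl n) (hfin : f xb ≠ ⊤)
    (w v : Eucl n) (hvcrit : subderiv f xb w = ((⟪v, w⟫ : ℝ) : EReal))
    {t : ℝ} (ht : 0 < t) (z : Eucl n) :
    ssdQuot f xb v t (w + (t/2) • z) = psdQuot f xb w t z - ((⟪v, z⟫ : ℝ) : EReal) := by
  obtain ⟨r, hr⟩ : ∃ r : ℝ, f xb = (r : EReal) :=
    ⟨(f xb).toReal, (EReal.coe_toReal hfin (hfbot xb)).symm⟩
  have ht' : t ≠ 0 := ne_of_gt ht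
  have hpt : xb + t • (w + (t/2) • z) = xb + t • w + (t^2/2) • z := by
    rw [smul_add, smul_smul, ← add_assoc]
    ring_nf
  have hip : ⟪v, w + (t/2) • z⟫ = ⟪v, w⟫ + (t/2) * ⟪v, z⟫ := by
    rw [inner_add_right, real_inner_smul_right]
  rw [ssdQuot, psdQuot, hpt, hvcrit, hr]
  set y := xb + t • w + (t^2/2) • z with hy
  rcases eq_or_ne (f y) ⊤ with hyt | hyt
  · rw [hyt]
    have hpos : (0:ℝ) < 2 / t^2 := by positivity
    rw [show ((t:EReal) * ((⟪v, w⟫ : ℝ) : EReal)) = ((t * ⟪v, w⟫ : ℝ) : EReal) from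
      (EReal.coe_mul _ _).symm]
    simp only [EReal.top_sub_coe, EReal.coe_mul_top_of_pos hpos]
  · obtain ⟨s, hs⟩ : ∃ s : ℝ, f y = (s : EReal) :=
      ⟨(f y).toReal, (EReal.coe_toReal hyt (hfbot y)).symm⟩
    rw [hs]
    rw [show ((t:EReal) * ((⟪v, w⟫ : ℝ) : EReal)) = ((t * ⟪v, w⟫ : ℝ) : EReal) from
      (EReal.coe_mul _ _).symm]
    norm_cast
    rw [hip]
    field_simp
    ring

/-- for `v ∈ 𝒜(xb,w)` with `f` parabolically regular at `xb` for `v`,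
the Fenchel conjugate of `d²f(xb)(w|·)` at `v` equals `−d²f(xb|v)(w)`. -/
theorem statement10 {n : ℕ} (f : Eucl n → EReal)
    (hfbot : ∀ x, f x ≠ ⊥) (hflsc : LowerSemicontinuous f) (hfconv : EConvexOn f)
    (xb : Eucl n) (hfin : f xb ≠ ⊤)
    (vb : Eucl n) (hvb : vb ∈ convexSubdiff f xb)
    (w : Eucl n) (hcrit : subderiv f xb w = ((⟪vb, w⟫ : ℝ) : EReal))
    (hpe : ParaEpiDiff f xb w)
    (v : Eucl n) (hvA : v ∈ convexSubdiff f xb)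
    (hvcrit : subderiv f xb w = ((⟪v, w⟫ : ℝ) : EReal))
    (hpr : ParaRegular f xb v) :
    fenchel (fun z : Eucl n => parabolicSubderiv f xb w z) v
      = - secondSubderiv f xb v w := by
  have key_le : ∀ z : Eucl n,
      secondSubderiv f xb v w ≤ parabolicSubderiv f xb w z - ((⟪v, z⟫ : ℝ) : EReal) := by
    intro z
    set t : ℕ → ℝ := fun k => 1 / (k + 1) with htdef
    have htpos : ∀ k, 0 < t k := fun k => by positivity
    have ht0 : Tendsto t atTop (𝓝 0) := tendsto_one_div_add_atTop_nhds_zero_nat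
    obtain ⟨zk, hzk, hpsd⟩ := hpe.2 z t htpos ht0
    set u : ℕ → ℝ × Eucl n := fun k => (t k, w + (t k / 2) • zk k) with hudef
    have hu : Tendsto u atTop ((𝓝[>] (0:ℝ)) ×ˢ 𝓝 w) := by
      refine Tendsto.prodMk ?_ ?_
      · exact tendsto_nhdsWithin_of_tendsto_nhds_of_eventually_within _ ht0
          (Eventually.of_forall fun k => htpos k)
      · have h1 : Tendsto (fun k => (t k / 2) • zk k) atTop (𝓝 ((0 / 2 : ℝ) • z)) :=
          (ht0.div_const 2).smul hzk
        simpa using tendsto_const_nhds.add h1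
    have hc : Tendsto (fun k => (-(⟪v, zk k⟫ : ℝ) : EReal)) atTop
        (𝓝 ((-(⟪v, z⟫ : ℝ) : ℝ) : EReal)) := by
      exact continuous_coe_real_ereal.continuousAt.tendsto.comp
        ((tendsto_const_nhds.inner hzk).neg)
    have hadd : ContinuousAt (fun p : EReal × EReal => p.1 + p.2)
        (parabolicSubderiv f xb w z, ((-(⟪v, z⟫ : ℝ) : ℝ) : EReal)) :=
      EReal.continuousAt_add (Or.inr (by simp)) (Or.inr (by simp))
    have hgu : Tendsto (fun k => ssdQuot f xb v (u k).1 (u k).2) atTop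
        (𝓝 (parabolicSubderiv f xb w z - ((⟪v, z⟫ : ℝ) : EReal))) := by
      have heq : ∀ k, ssdQuot f xb v (u k).1 (u k).2
          = psdQuot f xb w (t k) (zk k) + ((-(⟪v, zk k⟫ : ℝ) : ℝ) : EReal) := by
        intro k
        rw [show (u k).1 = t k from rfl, show (u k).2 = w + (t k / 2) • zk k from rfl,
          ssd_psd_identity f hfbot xb hfin w v hvcrit (htpos k) (zk k),
          sub_eq_add_neg, EReal.coe_neg]
      simp only [heq]
      have := hadd.tendsto.comp (hpsd.prodMk_nhds hc)
      rw [show parabolicSubderiv f xb w z + ((-(⟪v, z⟫ : ℝ) : ℝ) : EReal)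
          = parabolicSubderiv f xb w z - ((⟪v, z⟫ : ℝ) : EReal) by
        rw [EReal.coe_neg, ← sub_eq_add_neg]] at this
      exact this
    exact liminf_le_of_tendsto_seq hu hgu
  refine le_antisymm (iSup_le fun z => ?_) ?_
  · have h := key_le z
    have hne : -(parabolicSubderiv f xb w z - ((⟪v, z⟫ : ℝ) : EReal))
        = ((⟪v, z⟫ : ℝ) : EReal) - parabolicSubderiv f xb w z := by
      rw [EReal.neg_sub (Or.inr (by simp)) (Or.inr (by simp)), add_comm, ← sub_eq_add_neg]
    calc ((⟪v, z⟫ : ℝ) : EReal) - parabolicSubderiv f xb w z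
        = -(parabolicSubderiv f xb w z - ((⟪v, z⟫ : ℝ) : EReal)) := hne.symm
      _ ≤ -secondSubderiv f xb v w := EReal.neg_le_neg_iff.2 h
  · rcases eq_or_ne (secondSubderiv f xb v w) ⊤ with hDtop | hDtop
    · rw [hDtop]
      simp
    · obtain ⟨t, wk, htpos, ht0, hwk, hssd, C, hC⟩ := hpr.2 w (lt_top_iff_ne_top.mpr hDtop)
      set zk : ℕ → Eucl n := fun k => (2 / t k) • (wk k - w) with hzkdef
      have hzk_mem : ∀ k, zk k ∈ Metric.closedBall (0 : Eucl n) (2 * C) := by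
        intro k
        rw [Metric.mem_closedBall, dist_zero_right]
        have h1 : ‖zk k‖ = (2 / t k) * ‖wk k - w‖ := by
          have htk := htpos k
          rw [hzkdef, norm_smul, Real.norm_eq_abs, abs_of_pos (by positivity)]
        rw [h1]
        calc (2 / t k) * ‖wk k - w‖ ≤ (2 / t k) * (C * t k) :=
              mul_le_mul_of_nonneg_left (hC k) (by have := htpos k; positivity)
          _ = 2 * C := by
              have htk : t k ≠ 0 := (htpos k).ne'
              field_simp
      obtain ⟨z, -, φ, hφ, hzφ⟩ :=
        tendsto_subseq_of_bounded Metric.isBounded_closedBall hzk_mem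
      have hwkeq : ∀ k, wk k = w + (t k / 2) • zk k := by
        intro k
        have htk : t k ≠ 0 := (htpos k).ne'
        rw [hzkdef, smul_smul, show t k / 2 * (2 / t k) = 1 by
          field_simp, one_smul]
        abel
      have hpsd_eq : ∀ k, psdQuot f xb w (t k) (zk k)
          = ssdQuot f xb v (t k) (wk k) + ((⟪v, zk k⟫ : ℝ) : EReal) := by
        intro k
        have h := ssd_psd_identity f hfbot xb hfin w v hvcrit (htpos k) (zk k)
        rw [← hwkeq k] at h
        have h2 : ssdQuot f xb v (t k) (wk k) + ((⟪v, zk k⟫ : ℝ) : EReal)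
            = psdQuot f xb w (t k) (zk k) := by
          rw [h, EReal.sub_add_cancel]
        exact h2.symm
      have hcφ : Tendsto (fun k => ((⟪v, zk (φ k)⟫ : ℝ) : EReal)) atTop
          (𝓝 ((⟪v, z⟫ : ℝ) : EReal)) :=
        continuous_coe_real_ereal.continuousAt.tendsto.comp (tendsto_const_nhds.inner hzφ)
      have hssdφ : Tendsto (fun k => ssdQuot f xb v (t (φ k)) (wk (φ k))) atTop
          (𝓝 (secondSubderiv f xb v w)) := hssd.comp hφ.tendsto_atTop
      have hadd : ContinuousAt (fun p : EReal × EReal => p.1 + p.2)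
          (secondSubderiv f xb v w, ((⟪v, z⟫ : ℝ) : EReal)) :=
        EReal.continuousAt_add (Or.inr (by simp)) (Or.inr (by simp))
      have hpsdφ : Tendsto (fun k => psdQuot f xb w (t (φ k)) (zk (φ k))) atTop
          (𝓝 (secondSubderiv f xb v w + ((⟪v, z⟫ : ℝ) : EReal))) := by
        simp only [hpsd_eq]
        exact hadd.tendsto.comp (hssdφ.prodMk_nhds hcφ)
      have hu : Tendsto (fun k => (t (φ k), zk (φ k))) atTop ((𝓝[>] (0:ℝ)) ×ˢ 𝓝 z) := by
        refine Tendsto.prodMk ?_ hzφ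
        exact tendsto_nhdsWithin_of_tendsto_nhds_of_eventually_within _
          (ht0.comp hφ.tendsto_atTop) (Eventually.of_forall fun k => htpos (φ k))
      have hPz : parabolicSubderiv f xb w z
          ≤ secondSubderiv f xb v w + ((⟪v, z⟫ : ℝ) : EReal) :=
        liminf_le_of_tendsto_seq hu hpsdφ
      have h4 : -(secondSubderiv f xb v w + ((⟪v, z⟫ : ℝ) : EReal))
          ≤ -parabolicSubderiv f xb w z := EReal.neg_le_neg_iff.2 hPz
      have h5 : -(secondSubderiv f xb v w + ((⟪v, z⟫ : ℝ) : EReal))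
          = -secondSubderiv f xb v w - ((⟪v, z⟫ : ℝ) : EReal) :=
        EReal.neg_add (Or.inr (by simp)) (Or.inr (by simp))
      have h3 : -secondSubderiv f xb v w
          ≤ ((⟪v, z⟫ : ℝ) : EReal) - parabolicSubderiv f xb w z := by
        calc -secondSubderiv f xb v w
            = (-secondSubderiv f xb v w - ((⟪v, z⟫ : ℝ) : EReal)) + ((⟪v, z⟫ : ℝ) : EReal) :=
              EReal.sub_add_cancel.symm
          _ ≤ -parabolicSubderiv f xb w z + ((⟪v, z⟫ : ℝ) : EReal) :=
              add_le_add_left (h5 ▸ h4) _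
          _ = ((⟪v, z⟫ : ℝ) : EReal) - parabolicSubderiv f xb w z := by
              rw [add_comm, ← sub_eq_add_neg]
      exact h3.trans
        (le_iSup (fun z => ((⟪v, z⟫ : ℝ) : EReal) - parabolicSubderiv f xb w z) z)
end
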